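/- arXiv:2102.06427 — 7 statements merged into one kernel-verified Lean document; each statement's English description precedes it below -/
import Mathlib

section
/- Let A be a terminating ARRIVAL instance and let v be a vertex whose shortest directed path in the switch graph G(A) to a destination (d or d̄) has length m. Then during the run procedure, the train visits v at most 2^m times. -/
set_option linter.unusedSectionVars false


variable {V : Type} [Fintype V] [DecidableEq V]

/-- An ARRIVAL instance: origin `o` and two successor functions into `V ⊕ Bool`,
where `Sum.inr false` is the destination `d` and `Sum.inr true` is `d̄`. -/
structure Arrival (V : Type) where
  o : V
  sEven : V → V ⊕ Bool
  sOdd : V → V ⊕ Bool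

/-- Destination predicate. -/
def DestP {V : Type} : V ⊕ Bool → Prop := fun u => ∃ t, u = Sum.inr t

/-- Edge relation of the switch graph (proper edges only). -/
def Arrival.Edge (A : Arrival V) (u w : V ⊕ Bool) : Prop :=
  ∃ x : V, u = Sum.inl x ∧ (w = A.sEven x ∨ w = A.sOdd x)

/-- There is a directed walk of length `m` from `u` to a vertex satisfying `P`. -/
def Arrival.PathLen (A : Arrival V) (u : V ⊕ Bool) (P : V ⊕ Bool → Prop) (m : ℕ) : Prop :=
  ∃ f : ℕ → V ⊕ Bool, f 0 = u ∧ P (f m) ∧ ∀ i < m, A.Edge (f i) (f (i + 1))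

/-- `m` is the length of a shortest directed path from `u` to a vertex satisfying `P`. -/
def Arrival.ShortestLen (A : Arrival V) (u : V ⊕ Bool) (P : V ⊕ Bool → Prop) (m : ℕ) : Prop :=
  A.PathLen u P m ∧ ∀ m' < m, ¬ A.PathLen u P m'

/-- The instance is terminating: from every vertex a destination is reachable. -/
def Arrival.Terminating (A : Arrival V) : Prop :=
  ∀ v : V, ∃ m, A.PathLen (Sum.inl v) DestP m

/-- One step of the run procedure on states (position, switch configuration);
`false` means the current successor is the even one. Destinations are absorbing. -/
def Arrival.runStep [DecidableEq V] (A : Arrival V) :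
    (V ⊕ Bool) × (V → Bool) → (V ⊕ Bool) × (V → Bool) := fun s =>
  match s.1 with
  | Sum.inr _ => s
  | Sum.inl v => ((if s.2 v then A.sOdd v else A.sEven v),
      fun u => if u = v then !s.2 v else s.2 u)

/-- The state of the run procedure after `k` proper steps (the train starts at `o`). -/
def Arrival.run [DecidableEq V] (A : Arrival V) (k : ℕ) : (V ⊕ Bool) × (V → Bool) :=
  A.runStep^[k] (Sum.inl A.o, fun _ => false)

/- ### auxiliary development -/

/-- `pv A v k` : at time `k` the train is at `v`. -/
def pv (A : Arrival V) (v : V) (k : ℕ) : Prop := (A.run k).1 = Sum.inl v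

instance (A : Arrival V) (v : V) : DecidablePred (pv A v) := fun _ =>
  inferInstanceAs (Decidable (_ = _))

lemma run_succ (A : Arrival V) (k : ℕ) : A.run (k+1) = A.runStep (A.run k) := by
  simp [Arrival.run, Function.iterate_succ_apply']

lemma runStep_inr (A : Arrival V) {s : (V ⊕ Bool) × (V → Bool)} {b : Bool}
    (h : s.1 = Sum.inr b) : A.runStep s = s := by
  unfold Arrival.runStep
  split <;> simp_all

lemma runStep_inl (A : Arrival V) {s : (V ⊕ Bool) × (V → Bool)} {v : V}
    (h : s.1 = Sum.inl v) :
    A.runStep s = ((if s.2 v then A.sOdd v else A.sEven v),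
      fun u => if u = v then !s.2 v else s.2 u) := by
  unfold Arrival.runStep
  split <;> simp_all

lemma run_inr_forever (A : Arrival V) {k : ℕ} {b : Bool}
    (h : (A.run k).1 = Sum.inr b) : ∀ t, k ≤ t → (A.run t).1 = Sum.inr b := by
  intro t ht
  induction t, ht using Nat.le_induction with
  | base => exact h
  | succ n hn ih => rw [run_succ, runStep_inr A ih]; exact ih

/-- The switch state equals the parity of the number of earlier visits. -/
lemma sw_parity (A : Arrival V) (v : V) : ∀ k,
    (A.run k).2 v = decide (Odd (Nat.count (pv A v) k)) := by
  intro k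
  induction k with
  | zero => simp [Arrival.run, Nat.count_zero]
  | succ k ih =>
    rw [Nat.count_succ, run_succ]
    rcases h : (A.run k).1 with w | b
    · rw [runStep_inl A h]
      by_cases hv : w = v
      · subst hv
        have hp : pv A w k := h
        simp only [if_pos rfl, if_pos hp]
        rw [ih]
        simp only [Nat.odd_add_one, ← Nat.not_even_iff_odd, decide_not, Bool.not_not]
        simp [decide_not]
      · have hp : ¬ pv A v k := by
          simp only [pv, h, Sum.inl.injEq]
          exact fun hh => hv hh
        simp only [if_neg hp, add_zero]
        rw [if_neg (fun hh : v = w => hv hh.symm)]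
        exact ih
    · rw [runStep_inr A h]
      have hp : ¬ pv A v k := by simp [pv, h]
      rw [if_neg hp]
      exact ih

/-- Departure direction from a visit, by parity of previous visit count. -/
lemma departure (A : Arrival V) {v : V} {k : ℕ} (h : pv A v k) :
    (A.run (k+1)).1 =
      if Odd (Nat.count (pv A v) k) then A.sOdd v else A.sEven v := by
  rw [run_succ, runStep_inl A h]
  simp only []
  rw [sw_parity A v k]
  by_cases hodd : Odd (Nat.count (pv A v) k) <;> simp [hodd]

/-- Basic facts about the `c`-th visit, given the count reaches past `c`. -/
lemma nth_spec {p : ℕ → Prop} [DecidablePred p] {c K : ℕ} (h : c < Nat.count p K) :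
    p (Nat.nth p c) ∧ Nat.count p (Nat.nth p c) = c := by
  have hc : ∀ hf : (setOf p).Finite, c < hf.toFinset.card :=
    fun hf => lt_of_lt_of_le h (Nat.count_le_card hf K)
  exact ⟨Nat.nth_mem c hc, Nat.count_nth hc⟩

lemma nth_le_nth_of_spec {p : ℕ → Prop} [DecidablePred p] {c c' K : ℕ}
    (hc : c < Nat.count p K) (hc' : c' < Nat.count p K) (h : c ≤ c') :
    Nat.nth p c ≤ Nat.nth p c' := by
  by_contra hlt
  push_neg at hlt
  have h1 := (nth_spec hc').1
  have h2 := (nth_spec hc').2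
  have h3 := (nth_spec hc).2
  have : Nat.count p (Nat.nth p c' + 1) ≤ Nat.count p (Nat.nth p c) :=
    Nat.count_monotone p hlt
  rw [Nat.count_succ, if_pos h1, h2, h3] at this
  omega

lemma nth_lt_nth_of_spec {p : ℕ → Prop} [DecidablePred p] {c c' K : ℕ}
    (hc : c < Nat.count p K) (hc' : c' < Nat.count p K) (h : c < c') :
    Nat.nth p c < Nat.nth p c' := by
  by_contra hle
  push_neg at hle
  have h2 := (nth_spec hc').2
  have h3 := (nth_spec hc).2
  have := Nat.count_monotone p hle
  rw [h2, h3] at this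
  omega

/-- Counting arrivals at `x` coming from visits of `v` with counts in a class `q`. -/
lemma arrivals (A : Arrival V) (v x : V) (q : ℕ → Prop) [DecidablePred q]
    (hdep : ∀ k, pv A v k → q (Nat.count (pv A v) k) → pv A x (k+1))
    {N n cs K : ℕ} (hcsN : cs < N)
    (hmax : ∀ c < N, q c → c ≤ cs)
    (hcard : ((Finset.range N).filter q).card = n)
    (hK : N ≤ Nat.count (pv A v) K) :
    n ≤ Nat.count (pv A x) (Nat.nth (pv A v) cs + 2) := by
  classical
  set P := pv A v with hP
  have hspec : ∀ c < N, pv A v (Nat.nth P c) ∧ Nat.count P (Nat.nth P c) = c :=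
    fun c hc => nth_spec (lt_of_lt_of_le hc hK)
  let F : ℕ → ℕ := fun c => Nat.nth P c + 1
  have hsub : ((Finset.range N).filter q).image F ⊆
      (Finset.range (Nat.nth P cs + 2)).filter (pv A x) := by
    intro t ht
    simp only [Finset.mem_image, Finset.mem_filter, Finset.mem_range] at ht ⊢
    obtain ⟨c, ⟨hcN, hqc⟩, rfl⟩ := ht
    show Nat.nth P c + 1 < Nat.nth P cs + 2 ∧ pv A x (Nat.nth P c + 1)
    obtain ⟨hpc, hcnt⟩ := hspec c hcN
    constructor
    · have : Nat.nth P c ≤ Nat.nth P cs :=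
        nth_le_nth_of_spec (lt_of_lt_of_le hcN hK) (lt_of_lt_of_le hcsN hK)
          (hmax c hcN hqc)
      omega
    · exact hdep _ hpc (by rw [hcnt]; exact hqc)
  have hinj : Set.InjOn F ((Finset.range N).filter q) := by
    intro c hc c' hc' hEq
    simp only [Finset.coe_filter, Finset.mem_range, Set.mem_setOf_eq] at hc hc'
    have h1 := (hspec c hc.1).2
    have h2 := (hspec c' hc'.1).2
    have : Nat.nth P c = Nat.nth P c' := by simpa [F] using hEq
    rw [← h1, ← h2, this]
  calc n = (((Finset.range N).filter q).image F).card := by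
        rw [Finset.card_image_of_injOn hinj, hcard]
    _ ≤ ((Finset.range (Nat.nth P cs + 2)).filter (pv A x)).card :=
        Finset.card_le_card hsub
    _ = Nat.count (pv A x) (Nat.nth P cs + 2) :=
        (Nat.count_eq_card_filter_range _ _).symm

lemma card_odd_range (n : ℕ) :
    ((Finset.range (2*n)).filter (fun c => Odd c)).card = n := by
  induction n with
  | zero => simp
  | succ n ih =>
    have h2 : 2 * (n+1) = (2*n + 1) + 1 := by ring
    rw [h2, Finset.range_add_one, Finset.filter_insert, Finset.range_add_one,
      Finset.filter_insert]
    have h1 : Odd (2*n+1) := ⟨n, by ring⟩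
    have h0 : ¬ Odd (2*n) := by simp [Nat.odd_iff]
    rw [if_pos h1, if_neg h0, Finset.card_insert_of_notMem, ih]
    simp

lemma card_even_range (n : ℕ) :
    ((Finset.range (2*n)).filter (fun c => ¬ Odd c)).card = n := by
  have htot : ((Finset.range (2*n)).filter (fun c => Odd c)).card +
      ((Finset.range (2*n)).filter (fun c => ¬ Odd c)).card = 2*n := by
    rw [Finset.card_filter_add_card_filter_not, Finset.card_range]
  rw [card_odd_range] at htot
  omega

lemma shortest_unique (A : Arrival V) {u : V ⊕ Bool} {P : V ⊕ Bool → Prop} {m m' : ℕ}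
    (h : A.ShortestLen u P m) (h' : A.ShortestLen u P m') : m = m' := by
  rcases lt_trichotomy m m' with hlt | heq | hgt
  · exact absurd h.1 (h'.2 m hlt)
  · exact heq
  · exact absurd h'.1 (h.2 m' hgt)

lemma not_shortest_inl_zero (A : Arrival V) (v : V) :
    ¬ A.ShortestLen (Sum.inl v) DestP 0 := by
  rintro ⟨⟨f, hf0, hfP, -⟩, -⟩
  rw [hf0] at hfP
  obtain ⟨t, ht⟩ := hfP
  exact Sum.inl_ne_inr ht

/-- The successor along a shortest path. -/
lemma shortest_tail (A : Arrival V) {v : V} {m : ℕ}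
    (hm : A.ShortestLen (Sum.inl v) DestP (m+1)) :
    ∃ w, (w = A.sEven v ∨ w = A.sOdd v) ∧ A.ShortestLen w DestP m := by
  obtain ⟨⟨f, hf0, hfP, hfE⟩, hmin⟩ := hm
  have hE0 := hfE 0 (Nat.succ_pos m)
  obtain ⟨x, hx0, hxsucc⟩ := hE0
  rw [hf0] at hx0
  have hxv : x = v := by injection hx0.symm
  subst hxv
  refine ⟨f 1, hxsucc, ?_, ?_⟩
  · exact ⟨fun i => f (i+1), rfl, hfP, fun i hi => hfE (i+1) (by omega)⟩
  · intro m'' hm'' ⟨g, hg0, hgP, hgE⟩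
    refine hmin (m''+1) (by omega) ⟨fun i => if i = 0 then f 0 else g (i-1),
      by simp [hf0], ?_, ?_⟩
    · simpa using hgP
    · intro i hi
      rcases Nat.eq_zero_or_pos i with rfl | hpos
      · simp only [hg0]
        refine ⟨x, by simp [hf0], ?_⟩
        simpa using hxsucc
      · have h1 : ¬ (i = 0) := by omega
        have h2 : ¬ (i + 1 = 0) := by omega
        simp only [h1, h2, if_false]
        have : i - 1 + 1 = i ∧ i + 1 - 1 = i := by omega
        rw [this.1.symm] at hi ⊢
        simpa [this.1] using hgE (i-1) (by omega)

theorem main_claim (A : Arrival V) : ∀ m, ∀ v : V, A.ShortestLen (Sum.inl v) DestP m →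
    (∀ K, Nat.count (pv A v) K ≤ 2^m) ∧
    (∀ k, pv A v k → Nat.count (pv A v) (k+1) = 2^m → ∀ t, k < t →
      (∃ b, (A.run t).1 = Sum.inr b) ∨
      ∃ z m', (A.run t).1 = Sum.inl z ∧ A.ShortestLen (Sum.inl z) DestP m' ∧ m' < m) := by
  intro m
  induction m using Nat.strong_induction_on with
  | _ m IH =>
  intro v hm
  rcases m with _ | m
  · exact absurd hm (not_shortest_inl_zero A v)
  by_cases hx' : ∃ x', A.sEven v = Sum.inl x' ∧ A.ShortestLen (Sum.inl x') DestP m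
  · -- Even successor is on a shortest path: at most 2^(m+1) - 1 visits.
    obtain ⟨x', hsE, hxs⟩ := hx'
    have hxne : x' ≠ v := by
      intro h
      subst h
      have := shortest_unique A hxs hm
      omega
    have IHx := IH m (by omega) x' hxs
    have hdep : ∀ k, pv A v k → ¬ Odd (Nat.count (pv A v) k) → pv A x' (k+1) := by
      intro k hk hev
      have h := departure A hk
      rw [if_neg hev, hsE] at h
      exact h
    have hp1 : 1 ≤ 2^m := Nat.one_le_two_pow
    have hp2 : 2^(m+1) = 2*2^m := by ring
    have hstrong : ∀ K, Nat.count (pv A v) K ≤ 2^(m+1) - 1 := by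
      intro K
      by_contra hbig
      push_neg at hbig
      have hK : 2^(m+1) ≤ Nat.count (pv A v) K := by omega
      have hcs_even : ¬ Odd (2^(m+1) - 2) := by rw [Nat.odd_iff]; omega
      have harr : 2^m ≤ Nat.count (pv A x') (Nat.nth (pv A v) (2^(m+1) - 2) + 2) := by
        refine arrivals A v x' (fun c => ¬ Odd c) hdep (K := K) (by omega) ?_ ?_ hK
        · intro c hc hodd
          rw [Nat.odd_iff] at hodd
          omega
        · rw [hp2]
          exact card_even_range _
      have hceq : Nat.count (pv A x') (Nat.nth (pv A v) (2^(m+1) - 2) + 2) = 2^m :=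
        le_antisymm (IHx.1 _) harr
      obtain ⟨hpcs, hccs⟩ := nth_spec (p := pv A v)
        (show 2^(m+1) - 2 < Nat.count (pv A v) K by omega)
      have hpx : pv A x' (Nat.nth (pv A v) (2^(m+1) - 2) + 1) :=
        hdep _ hpcs (by rw [hccs]; exact hcs_even)
      have hB := IHx.2 _ hpx hceq
      obtain ⟨hpc', hcc'⟩ := nth_spec (p := pv A v)
        (show 2^(m+1) - 1 < Nat.count (pv A v) K by omega)
      have hlt : Nat.nth (pv A v) (2^(m+1) - 2) < Nat.nth (pv A v) (2^(m+1) - 1) :=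
        nth_lt_nth_of_spec (K := K) (by omega) (by omega) (by omega)
      have hne : Nat.nth (pv A v) (2^(m+1) - 1) ≠ Nat.nth (pv A v) (2^(m+1) - 2) + 1 := by
        intro hEq
        rw [hEq] at hpc'
        rw [pv] at hpc' hpx
        rw [hpc'] at hpx
        exact hxne (by injection hpx with h; exact h.symm)
      rcases hB (Nat.nth (pv A v) (2^(m+1) - 1)) (by omega) with ⟨b, hb⟩ | ⟨z, m', hz, hzs, hm'⟩
      · rw [pv] at hpc'; rw [hpc'] at hb; exact Sum.inl_ne_inr hb
      · rw [pv] at hpc'; rw [hpc'] at hz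
        obtain rfl : v = z := Sum.inl.inj hz
        have := shortest_unique A hzs hm
        omega
    refine ⟨fun K => le_trans (hstrong K) (by omega), ?_⟩
    intro k hk hcnt t ht
    exfalso
    have := hstrong (k+1)
    rw [hcnt] at this
    omega
  · obtain ⟨w, hwsucc, hwshort⟩ := shortest_tail A hm
    rcases w with z | b
    · -- proper successor on shortest path, necessarily the odd one
      rcases m with _ | m
      · exact absurd hwshort (not_shortest_inl_zero A z)
      have hsO : A.sOdd v = Sum.inl z := by
        rcases hwsucc with h | h
        · exact absurd ⟨z, h.symm, hwshort⟩ hx'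
        · exact h.symm
      have hzne : z ≠ v := by
        intro h
        subst h
        have := shortest_unique A hwshort hm
        omega
      have IHz := IH (m+1) (by omega) z hwshort
      have hdep : ∀ k, pv A v k → Odd (Nat.count (pv A v) k) → pv A z (k+1) := by
        intro k hk hodd
        have h := departure A hk
        rw [if_pos hodd, hsO] at h
        exact h
      have hp1 : 1 ≤ 2^(m+1) := Nat.one_le_two_pow
      have hp2 : 2^(m+2) = 2*2^(m+1) := by ring
      have hcs_odd : Odd (2^(m+2) - 1) := by rw [Nat.odd_iff]; omega
      have hcard : ((Finset.range (2^(m+2))).filter (fun c => Odd c)).card = 2^(m+1) := by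
        rw [hp2]
        exact card_odd_range _
      constructor
      · intro K
        by_contra hbig
        push_neg at hbig
        have hK : 2^(m+2) + 1 ≤ Nat.count (pv A v) K := by omega
        have harr : 2^(m+1) ≤ Nat.count (pv A z) (Nat.nth (pv A v) (2^(m+2) - 1) + 2) := by
          refine arrivals A v z (fun c => Odd c) hdep (K := K) (N := 2^(m+2) + 1)
            (by omega) ?_ ?_ (by omega)
          · intro c hc hodd
            rw [Nat.odd_iff] at hodd
            omega
          · rw [Finset.range_add_one, Finset.filter_insert,
              if_neg (by rw [Nat.odd_iff]; omega : ¬ Odd (2^(m+2)))]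
            exact hcard
        have hceq : Nat.count (pv A z) (Nat.nth (pv A v) (2^(m+2) - 1) + 2) = 2^(m+1) :=
          le_antisymm (IHz.1 _) harr
        obtain ⟨hpcs, hccs⟩ := nth_spec (p := pv A v)
          (show 2^(m+2) - 1 < Nat.count (pv A v) K by omega)
        have hpx : pv A z (Nat.nth (pv A v) (2^(m+2) - 1) + 1) :=
          hdep _ hpcs (by rw [hccs]; exact hcs_odd)
        have hB := IHz.2 _ hpx hceq
        obtain ⟨hpc', hcc'⟩ := nth_spec (p := pv A v)
          (show 2^(m+2) < Nat.count (pv A v) K by omega)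
        have hlt : Nat.nth (pv A v) (2^(m+2) - 1) < Nat.nth (pv A v) (2^(m+2)) :=
          nth_lt_nth_of_spec (K := K) (by omega) (by omega) (by omega)
        have hne : Nat.nth (pv A v) (2^(m+2)) ≠ Nat.nth (pv A v) (2^(m+2) - 1) + 1 := by
          intro hEq
          rw [hEq] at hpc'
          rw [pv] at hpc' hpx
          rw [hpc'] at hpx
          exact hzne (by injection hpx with h; exact h.symm)
        rcases hB (Nat.nth (pv A v) (2^(m+2))) (by omega) with ⟨b, hb⟩ | ⟨z', m', hz', hzs, hm'⟩
        · rw [pv] at hpc'; rw [hpc'] at hb; exact Sum.inl_ne_inr hb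
        · rw [pv] at hpc'; rw [hpc'] at hz'
          obtain rfl : v = z' := Sum.inl.inj hz'
          have := shortest_unique A hzs hm
          omega
      · intro k hk hcnt t ht
        have hck : Nat.count (pv A v) k = 2^(m+2) - 1 := by
          rw [Nat.count_succ, if_pos hk] at hcnt
          omega
        have hpz : pv A z (k+1) := hdep k hk (by rw [hck]; exact hcs_odd)
        have hkn : Nat.nth (pv A v) (2^(m+2) - 1) = k := by
          have h := Nat.nth_count (p := pv A v) hk
          rw [hck] at h
          exact h
        have harr : 2^(m+1) ≤ Nat.count (pv A z) (k + 2) := by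
          have := arrivals A v z (fun c => Odd c) hdep (K := k+1) (N := 2^(m+2))
            (cs := 2^(m+2) - 1) (by omega)
            (by intro c hc hodd; omega) hcard (by omega)
          rwa [hkn] at this
        have hceq : Nat.count (pv A z) ((k+1) + 1) = 2^(m+1) :=
          le_antisymm (IHz.1 _) harr
        have hB := IHz.2 (k+1) hpz hceq
        rcases eq_or_lt_of_le (Nat.succ_le_of_lt ht) with hEq | hlt
        · right
          refine ⟨z, m+1, ?_, hwshort, by omega⟩
          rw [← hEq]
          exact hpz
        · rcases hB t hlt with h | ⟨z', m', h1, h2, h3⟩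
          · exact Or.inl h
          · exact Or.inr ⟨z', m', h1, h2, by omega⟩
    · -- destination is a direct successor: distance is 1
      have hm0 : m = 0 := by
        by_contra hne
        exact hwshort.2 0 (by omega) ⟨fun _ => Sum.inr b, rfl, ⟨b, rfl⟩, by omega⟩
      subst hm0
      by_cases hEr : ∃ b', A.sEven v = Sum.inr b'
      · obtain ⟨b', hb'⟩ := hEr
        have hstrong : ∀ K, Nat.count (pv A v) K ≤ 1 := by
          intro K
          by_contra hbig
          push_neg at hbig
          obtain ⟨hp0, hc0⟩ := nth_spec (p := pv A v)
            (show 0 < Nat.count (pv A v) K by omega)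
          have h := departure A hp0
          rw [hc0, if_neg (by simp), hb'] at h
          have habs := run_inr_forever A h
          obtain ⟨hq1, hc1⟩ := nth_spec (p := pv A v)
            (show 1 < Nat.count (pv A v) K by omega)
          have hlt : Nat.nth (pv A v) 0 < Nat.nth (pv A v) 1 :=
            nth_lt_nth_of_spec (K := K) (by omega) (by omega) (by omega)
          have := habs (Nat.nth (pv A v) 1) (by omega)
          rw [pv] at hq1
          rw [hq1] at this
          exact Sum.inl_ne_inr this
        refine ⟨fun K => le_trans (hstrong K) (by norm_num), ?_⟩
        intro k hk hcnt t ht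
        exfalso
        have := hstrong (k+1)
        rw [hcnt] at this
        norm_num at this
      · have hsO : A.sOdd v = Sum.inr b := by
          rcases hwsucc with h | h
          · exact absurd ⟨b, h.symm⟩ hEr
          · exact h.symm
        constructor
        · intro K
          by_contra hbig
          push_neg at hbig
          obtain ⟨hq1, hc1⟩ := nth_spec (p := pv A v)
            (show 1 < Nat.count (pv A v) K by omega)
          have h := departure A hq1
          rw [hc1, if_pos (by simp), hsO] at h
          have habs := run_inr_forever A h
          obtain ⟨hq2, hc2⟩ := nth_spec (p := pv A v)
            (show 2 < Nat.count (pv A v) K by omega)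
          have hlt : Nat.nth (pv A v) 1 < Nat.nth (pv A v) 2 :=
            nth_lt_nth_of_spec (K := K) (by omega) (by omega) (by omega)
          have := habs (Nat.nth (pv A v) 2) (by omega)
          rw [pv] at hq2
          rw [hq2] at this
          exact Sum.inl_ne_inr this
        · intro k hk hcnt t ht
          have hck : Nat.count (pv A v) k = 1 := by
            rw [Nat.count_succ, if_pos hk] at hcnt
            norm_num at hcnt
            omega
          have h := departure A hk
          rw [hck, if_pos (by simp), hsO] at h
          exact Or.inl ⟨b, run_inr_forever A h t (by omega)⟩

/-- If the shortest path from `v` to a destination has length `m`, the run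
procedure visits `v` at most `2 ^ m` times. -/
theorem arrival_visits_bound (A : Arrival V) (hA : A.Terminating) (v : V) (m : ℕ)
    (hm : A.ShortestLen (Sum.inl v) DestP m) :
    {k : ℕ | (A.run k).1 = Sum.inl v}.Finite ∧
      {k : ℕ | (A.run k).1 = Sum.inl v}.ncard ≤ 2 ^ m := by
  have hb := (main_claim A m v hm).1
  have key : ∀ T : Finset ℕ, ↑T ⊆ {k : ℕ | (A.run k).1 = Sum.inl v} → T.card ≤ 2^m := by
    intro T hT
    have hsub : T ⊆ (Finset.range (T.sup id + 1)).filter (pv A v) := by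
      intro e he
      simp only [Finset.mem_filter, Finset.mem_range]
      exact ⟨Nat.lt_succ_of_le (Finset.le_sup (f := id) he), hT he⟩
    calc T.card ≤ ((Finset.range (T.sup id + 1)).filter (pv A v)).card :=
          Finset.card_le_card hsub
      _ = Nat.count (pv A v) (T.sup id + 1) := (Nat.count_eq_card_filter_range _ _).symm
      _ ≤ 2^m := hb _
  have hfin : {k : ℕ | (A.run k).1 = Sum.inl v}.Finite := by
    by_contra hinf
    rw [← Set.not_infinite, not_not] at hinf
    obtain ⟨T, hT, hcard⟩ := hinf.exists_subset_card_eq (2^m + 1)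
    have := key T hT
    omega
  refine ⟨hfin, ?_⟩
  rw [Set.ncard_eq_toFinset_card _ hfin]
  exact key hfin.toFinset (by simp)
end

section
/- Let A be a terminating ARRIVAL instance with |V| = n, and let ℓ be the maximum over v ∈ V of the length of a shortest directed path from v to {d, d̄} in G(A). Then the run procedure traverses at most (n - ℓ + 2)·2^ℓ - 2 proper edges (edges other than (Y,o)) before terminating. -/
variable {V : Type} [Fintype V] [DecidableEq V]

/-!
Write `d v` for the distance from `v` to a destination. Once `v` has been visited `2 ^ d v` times,
the exit of `v` along a shortest path has been taken `2 ^ (d v - 1)` times, so its head `w`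
(unless it is a destination, where the run stops) has been visited `2 ^ d w` times. By induction on
`d v`, from then on the train only visits vertices strictly closer than `v`; in particular it never
returns to `v`, so `v` is visited at most `2 ^ d v` times. Every distance `1, …, ℓ` is attained, so
summing over `V` gives at most `(2 ^ (ℓ + 1) - 2) + (n - ℓ) * 2 ^ ℓ` steps.
-/

theorem Nat.exists_lt_count_succ_eq {p : ℕ → Prop} [DecidablePred p] {k : ℕ}
    (h : 0 < Nat.count p k) : ∃ j < k, p j ∧ Nat.count p (j + 1) = Nat.count p k := by
  induction k with
  | zero => simp at h
  | succ k ih =>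
    by_cases hk : p k
    · exact ⟨k, k.lt_succ_self, hk, rfl⟩
    · rw [Nat.count_succ, if_neg hk, add_zero] at h ⊢
      obtain ⟨j, hjk, hj, hcount⟩ := ih h
      exact ⟨j, by omega, hj, hcount⟩

theorem Nat.setOf_finite_and_ncard_le_of_count_le {p : ℕ → Prop} [DecidablePred p]
    (hp : ∀ k, p k → ∀ j ≤ k, p j) {B : ℕ} (hB : ∀ k, Nat.count p k ≤ B) :
    {k | p k}.Finite ∧ {k | p k}.ncard ≤ B := by
  have hlt : ∀ k, p k → k < B := fun k hk => by
    have hall : Nat.count p (k + 1) = k + 1 :=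
      Nat.count_iff_forall.mpr fun j hj => hp k hk j (by omega)
    have := hB (k + 1)
    omega
  have hS : {k | p k} = ↑((Finset.range B).filter p) := by
    ext k
    simpa using fun hk => hlt k hk
  rw [hS, Set.ncard_coe_finset, ← Nat.count_eq_card_filter_range]
  exact ⟨Finset.finite_toSet _, hB B⟩

theorem sum_two_pow_le_of_Icc_subset_range {ι : Type*} [Fintype ι] (f : ι → ℕ) {ℓ : ℕ}
    (hle : ∀ x, f x ≤ ℓ) (hrange : Set.Icc 1 ℓ ⊆ Set.range f) :
    ∑ x, 2 ^ f x ≤ (Fintype.card ι - ℓ + 2) * 2 ^ ℓ - 2 := by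
  classical
  cases isEmpty_or_nonempty ι
  · simp
  have hsec : ∀ i < ℓ, ∃ x, f x = i + 1 := fun i hi => hrange ⟨by omega, by omega⟩
  choose! g hg using hsec
  have hinj : Set.InjOn g (Finset.range ℓ) := fun i hi j hj hij => by
    have := (hg i (by simpa using hi)).symm.trans (hij ▸ hg j (by simpa using hj))
    omega
  set S := (Finset.range ℓ).image g
  have hcard : S.card = ℓ := by rw [Finset.card_image_of_injOn hinj, Finset.card_range]
  have hS : ∑ x ∈ S, 2 ^ f x + 2 ≤ 2 * 2 ^ ℓ := by
    have hgeom : ∑ i ∈ Finset.range ℓ, 2 ^ i < 2 ^ ℓ :=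
      Nat.geomSum_lt le_rfl fun i hi => Finset.mem_range.mp hi
    rw [Finset.sum_image hinj, Finset.sum_congr rfl fun i hi => by
      rw [hg i (Finset.mem_range.mp hi), pow_succ], ← Finset.sum_mul]
    omega
  have hrest : ∑ x ∈ Finset.univ \ S, 2 ^ f x ≤ (Fintype.card ι - ℓ) * 2 ^ ℓ := calc
    _ ≤ ∑ _x ∈ Finset.univ \ S, 2 ^ ℓ :=
      Finset.sum_le_sum fun x _ => Nat.pow_le_pow_right two_pos (hle x)
    _ = _ := by
      rw [Finset.sum_const, Finset.card_sdiff_of_subset S.subset_univ, Finset.card_univ, hcard,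
        smul_eq_mul]
  rw [← Finset.sum_sdiff S.subset_univ]
  have hsplit : (Fintype.card ι - ℓ + 2) * 2 ^ ℓ = (Fintype.card ι - ℓ) * 2 ^ ℓ + 2 * 2 ^ ℓ := by
    ring
  omega

namespace Arrival

section Distance

variable {V : Type} (A : Arrival V)

def succ (v : V) (b : Bool) : V ⊕ Bool := if b then A.sOdd v else A.sEven v

theorem edge_inl_iff {v : V} {w : V ⊕ Bool} : A.Edge (.inl v) w ↔ ∃ b, w = A.succ v b := by
  simp only [Edge, Sum.inl.injEq, exists_eq_left', succ]
  constructor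
  · rintro (h | h)
    exacts [⟨false, h⟩, ⟨true, h⟩]
  · rintro ⟨_ | _, h⟩
    exacts [.inl h, .inr h]

theorem pathLen_zero_iff {u : V ⊕ Bool} {P : V ⊕ Bool → Prop} : A.PathLen u P 0 ↔ P u :=
  ⟨fun ⟨_, h0, hP, _⟩ => h0 ▸ hP, fun h => ⟨fun _ => u, rfl, h, by simp⟩⟩

theorem pathLen_succ_iff {u : V ⊕ Bool} {P : V ⊕ Bool → Prop} {m : ℕ} :
    A.PathLen u P (m + 1) ↔ ∃ w, A.Edge u w ∧ A.PathLen w P m := by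
  constructor
  · rintro ⟨f, h0, hP, hE⟩
    exact ⟨f 1, h0 ▸ hE 0 m.succ_pos, fun i => f (i + 1), rfl, hP,
      fun i hi => hE (i + 1) (by omega)⟩
  · rintro ⟨w, huw, f, h0, hP, hE⟩
    refine ⟨fun | 0 => u | i + 1 => f i, rfl, hP, ?_⟩
    rintro (_ | i) hi
    · show A.Edge u (f 0)
      rwa [h0]
    · exact hE i (by omega)

variable {A} {dist : V → ℕ}

theorem dist_le_of_pathLen (hdist : ∀ v, A.ShortestLen (.inl v) DestP (dist v)) {v : V} {m : ℕ}
    (h : A.PathLen (.inl v) DestP m) : dist v ≤ m :=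
  not_lt.mp fun hlt => (hdist v).2 m hlt h

theorem one_le_dist (hdist : ∀ v, A.ShortestLen (.inl v) DestP (dist v)) (v : V) : 1 ≤ dist v := by
  by_contra h
  have hpath := (hdist v).1
  rw [show dist v = 0 by omega, pathLen_zero_iff] at hpath
  obtain ⟨_, ⟨⟩⟩ := hpath

theorem exists_succ_closer (hdist : ∀ v, A.ShortestLen (.inl v) DestP (dist v)) (v : V) :
    ∃ b, (∃ t, A.succ v b = .inr t ∧ dist v = 1) ∨
      ∃ w, A.succ v b = .inl w ∧ dist w + 1 = dist v := by
  have hvia : ∀ b m, A.PathLen (A.succ v b) DestP m → dist v ≤ m + 1 := fun b _ h =>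
    dist_le_of_pathLen hdist (A.pathLen_succ_iff.mpr ⟨_, A.edge_inl_iff.mpr ⟨b, rfl⟩, h⟩)
  obtain ⟨d, hd⟩ : ∃ d, dist v = d + 1 := ⟨dist v - 1, by have := one_le_dist hdist v; omega⟩
  have hpath := (hdist v).1
  rw [hd, pathLen_succ_iff] at hpath
  obtain ⟨_, hvw, hw⟩ := hpath
  obtain ⟨b, rfl⟩ := A.edge_inl_iff.mp hvw
  refine ⟨b, ?_⟩
  rcases hs : A.succ v b with w | t
  · have h₁ := dist_le_of_pathLen hdist (hs ▸ hw)
    have h₂ := hvia b _ (hs ▸ (hdist w).1)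
    exact .inr ⟨w, rfl, by omega⟩
  · have := hvia b 0 (A.pathLen_zero_iff.mpr (hs ▸ ⟨t, rfl⟩))
    exact .inl ⟨t, rfl, by omega⟩

theorem mem_range_dist (hdist : ∀ v, A.ShortestLen (.inl v) DestP (dist v)) {v : V} {i : ℕ}
    (hi : 1 ≤ i) (hiv : i ≤ dist v) : i ∈ Set.range dist := by
  obtain ⟨n, hn⟩ := Nat.exists_eq_add_of_le hiv
  induction n generalizing v with
  | zero => exact ⟨v, hn⟩
  | succ n ih =>
    obtain ⟨b, ⟨t, -, h1⟩ | ⟨w, -, hw⟩⟩ := exists_succ_closer hdist v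
    · omega
    · exact ih (v := w) (by omega) (by omega)

end Distance

section Run

variable {V : Type} [DecidableEq V] (A : Arrival V)

def pos (k : ℕ) : V ⊕ Bool := (A.run k).1

def switches (k : ℕ) : V → Bool := (A.run k).2

def visits (v : V) (k : ℕ) : ℕ := Nat.count (fun j => A.pos j = .inl v) k

def traversals (v : V) (b : Bool) (k : ℕ) : ℕ :=
  Nat.count (fun j => A.pos j = .inl v ∧ A.switches j v = b) k

theorem run_succ (k : ℕ) : A.run (k + 1) = A.runStep (A.run k) :=
  Function.iterate_succ_apply' _ _ _

variable {A}

theorem run_succ_of_pos_eq_inr {k : ℕ} {t : Bool} (h : A.pos k = .inr t) :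
    A.run (k + 1) = A.run k := by
  rw [run_succ, runStep, show (A.run k).1 = .inr t from h]

theorem pos_succ_of_pos_eq_inl {k : ℕ} {v : V} (h : A.pos k = .inl v) :
    A.pos (k + 1) = A.succ v (A.switches k v) := by
  rw [pos, run_succ, runStep, show (A.run k).1 = .inl v from h]
  rfl

theorem switches_succ_of_pos_eq_inl {k : ℕ} {v : V} (h : A.pos k = .inl v) (u : V) :
    A.switches (k + 1) u = if u = v then !A.switches k v else A.switches k u := by
  rw [switches, run_succ, runStep, show (A.run k).1 = .inl v from h]
  rfl

theorem pos_eq_inr_of_le {k m : ℕ} {t : Bool} (h : A.pos k = .inr t) (hkm : k ≤ m) :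
    A.pos m = .inr t := by
  induction m, hkm using Nat.le_induction with
  | base => exact h
  | succ m _ ih => rwa [pos, run_succ_of_pos_eq_inr ih]

theorem exists_pos_eq_inl_of_le {j k : ℕ} {v : V} (h : A.pos k = .inl v) (hjk : j ≤ k) :
    ∃ u, A.pos j = .inl u := by
  rcases hj : A.pos j with u | t
  · exact ⟨u, rfl⟩
  · simp [pos_eq_inr_of_le hj hjk] at h

theorem visits_succ (v : V) (k : ℕ) :
    A.visits v (k + 1) = A.visits v k + if A.pos k = .inl v then 1 else 0 :=
  Nat.count_succ _ _

theorem traversals_succ (v : V) (b : Bool) (k : ℕ) :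
    A.traversals v b (k + 1) =
      A.traversals v b k + if A.pos k = .inl v ∧ A.switches k v = b then 1 else 0 :=
  Nat.count_succ _ _

theorem switches_eq_decide_visits_mod_two (v : V) (k : ℕ) :
    A.switches k v = decide (A.visits v k % 2 = 1) := by
  induction k with
  | zero => rfl
  | succ k ih =>
    rw [visits_succ]
    rcases hk : A.pos k with w | t
    · rw [switches_succ_of_pos_eq_inl hk]
      by_cases hvw : v = w
      · subst hvw
        rcases Nat.mod_two_eq_zero_or_one (A.visits v k) with h | h <;> simp [ih, h, Nat.add_mod]
      · simp [hvw, Ne.symm hvw, ih]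
    · simpa [switches, run_succ_of_pos_eq_inr hk] using ih

theorem traversals_eq (v : V) (k : ℕ) :
    A.traversals v false k = (A.visits v k + 1) / 2 ∧ A.traversals v true k = A.visits v k / 2 := by
  induction k with
  | zero => simp [traversals, visits]
  | succ k ih =>
    simp only [traversals_succ, visits_succ, switches_eq_decide_visits_mod_two]
    by_cases hk : A.pos k = .inl v
    · rcases Nat.mod_two_eq_zero_or_one (A.visits v k) with h | h <;> simp [hk, h] <;> omega
    · simpa [hk] using ih

theorem visits_le_two_mul_traversals_add_one (v : V) (b : Bool) (k : ℕ) :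
    A.visits v k ≤ 2 * A.traversals v b k + 1 := by
  have := traversals_eq (A := A) v k
  cases b <;> omega

theorem traversals_le_visits_succ {v w : V} {b : Bool} (hw : A.succ v b = .inl w) (k : ℕ) :
    A.traversals v b k ≤ A.visits w (k + 1) := calc
  _ ≤ Nat.count (fun j => A.pos (j + 1) = .inl w) k :=
    Nat.count_mono_left fun j _ ⟨hj, hb⟩ => by rw [pos_succ_of_pos_eq_inl hj, hb, hw]
  _ ≤ A.visits w (k + 1) := by
    rw [visits, Nat.count_succ']
    exact Nat.le_add_right _ _

end Run

section Bound

variable {V : Type} [DecidableEq V] {A : Arrival V} {dist : V → ℕ}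

theorem dist_lt_of_two_pow_dist_le_visits (hdist : ∀ v, A.ShortestLen (.inl v) DestP (dist v))
    {v : V} {k : ℕ} (hk : 2 ^ dist v ≤ A.visits v k) {m : ℕ} (hkm : k ≤ m) {u : V}
    (hu : A.pos m = .inl u) : dist u < dist v := by
  induction hd : dist v using Nat.strong_induction_on generalizing v k m u with
  | _ d ih =>
  rw [hd] at hk
  obtain ⟨b, hb⟩ := exists_succ_closer hdist v
  have hpow : 2 ^ d = 2 * 2 ^ (d - 1) := by
    rw [← pow_succ', Nat.sub_add_cancel (hd ▸ one_le_dist hdist v)]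
  have htrav : 2 ^ (d - 1) ≤ A.traversals v b k := by
    have := visits_le_two_mul_traversals_add_one (A := A) v b k
    omega
  -- `j` is the last use of the closer exit before time `k`
  obtain ⟨j, hjk, ⟨hj, hjb⟩, hcount⟩ : ∃ j < k, (A.pos j = .inl v ∧ A.switches j v = b) ∧
      A.traversals v b (j + 1) = A.traversals v b k :=
    Nat.exists_lt_count_succ_eq (htrav.trans_lt' (Nat.two_pow_pos _))
  have hnext : A.pos (j + 1) = A.succ v b := hjb ▸ pos_succ_of_pos_eq_inl hj
  rcases hb with ⟨t, ht, -⟩ | ⟨w, hw, hwv⟩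
  · have := pos_eq_inr_of_le (hnext.trans ht) (by omega : j + 1 ≤ m)
    simp [hu] at this
  · rcases (show m = j + 1 ∨ j + 2 ≤ m by omega) with rfl | hjm
    · rw [hnext, hw, Sum.inl.injEq] at hu
      subst hu
      omega
    · have hw_visits : 2 ^ dist w ≤ A.visits w (j + 2) := calc
        2 ^ dist w = 2 ^ (d - 1) := by congr 1; omega
        _ ≤ A.traversals v b (j + 1) := hcount ▸ htrav
        _ ≤ A.visits w (j + 2) := traversals_le_visits_succ hw _
      have := ih (dist w) (by omega) hw_visits hjm hu rfl
      omega

theorem visits_le_two_pow_dist (hdist : ∀ v, A.ShortestLen (.inl v) DestP (dist v))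
    (v : V) (k : ℕ) : A.visits v k ≤ 2 ^ dist v := by
  by_contra! h
  obtain ⟨j, -, hj, hcount⟩ := Nat.exists_lt_count_succ_eq (h.trans_le' (Nat.zero_le _))
  have hj_visits : 2 ^ dist v ≤ A.visits v j := by
    rw [← visits, ← visits, visits_succ, if_pos hj] at hcount
    omega
  exact lt_irrefl _ (dist_lt_of_two_pow_dist_le_visits hdist hj_visits le_rfl hj)

theorem count_pos_eq_inl_eq_sum_visits [Fintype V] (A : Arrival V) (k : ℕ) :
    Nat.count (fun j => ∃ v, A.pos j = .inl v) k = ∑ v, A.visits v k := by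
  induction k with
  | zero => simp [visits]
  | succ k ih =>
    simp only [Nat.count_succ, visits_succ, Finset.sum_add_distrib, ih]
    rcases A.pos k with w | t <;> simp

end Bound

end Arrival

/-- The run procedure traverses at most `(n - ℓ + 2) * 2 ^ ℓ - 2` proper edges,
where `ℓ` is the maximum over `v ∈ V` of the shortest-path distance to a destination. -/
theorem arrival_run_length_bound (A : Arrival V) (n ℓ : ℕ) (hn : Fintype.card V = n)
    (dist : V → ℕ) (hdist : ∀ v : V, A.ShortestLen (Sum.inl v) DestP (dist v))
    (hub : ∀ v : V, dist v ≤ ℓ) (hmax : ∃ v : V, dist v = ℓ) :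
    {k : ℕ | ∃ v : V, (A.run k).1 = Sum.inl v}.Finite ∧
      {k : ℕ | ∃ v : V, (A.run k).1 = Sum.inl v}.ncard ≤ (n - ℓ + 2) * 2 ^ ℓ - 2 := by
  obtain ⟨v₀, hv₀⟩ := hmax
  have hrunning : ∀ k, (∃ v, A.pos k = .inl v) → ∀ j ≤ k, ∃ u, A.pos j = .inl u :=
    fun _ ⟨_, hv⟩ _ hjk => Arrival.exists_pos_eq_inl_of_le hv hjk
  have hcount : ∀ k, Nat.count (fun j => ∃ v, A.pos j = .inl v) k ≤ ∑ v, 2 ^ dist v := fun k =>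
    (A.count_pos_eq_inl_eq_sum_visits k).trans_le
      (Finset.sum_le_sum fun v _ => Arrival.visits_le_two_pow_dist hdist v k)
  have hsum : ∑ v, 2 ^ dist v ≤ (n - ℓ + 2) * 2 ^ ℓ - 2 :=
    hn ▸ sum_two_pow_le_of_Icc_subset_range dist hub fun i hi =>
      Arrival.mem_range_dist hdist hi.1 (hv₀ ▸ hi.2)
  obtain ⟨hfinite, hncard⟩ := Nat.setOf_finite_and_ncard_le_of_count_le hrunning hcount
  exact ⟨hfinite, hncard.trans hsum⟩
end

section
/- Let A be a terminating ARRIVAL instance and t ∈ {d, d̄}. The run procedure outputs t if and only if there exists a switching flow x for A with x⁻(t) = 1. -/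
variable {V : Type} [Fintype V] [DecidableEq V]

/-- A flow on the edges of the switch graph: value on the yard edge `(Y,o)` and on
the even/odd edge slot out of each vertex. -/
structure SFlow (V : Type) where
  yard : ℕ
  ev : V → ℕ
  od : V → ℕ

/-- Outflow `x⁺(v)` at a vertex `v ∈ V`. -/
def SFlow.out {V : Type} (x : SFlow V) (v : V) : ℕ := x.ev v + x.od v

/-- Inflow `x⁻(u)` at a vertex `u` of the switch graph. -/
def SFlow.into (A : Arrival V) (x : SFlow V) (u : V ⊕ Bool) : ℕ :=
  (if Sum.inl A.o = u then x.yard else 0) +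
    ∑ v : V, ((if A.sEven v = u then x.ev v else 0) + (if A.sOdd v = u then x.od v else 0))

/-- Total flow `Σ_e x_e`. -/
def SFlow.total [Fintype V] (x : SFlow V) : ℕ := x.yard + ∑ v : V, (x.ev v + x.od v)

/-- Switching flow: unit outflow at the yard, flow conservation at every `v ∈ V`,
and switching behavior `x_{(v,s_even(v))} - x_{(v,s_odd(v))} ∈ {0,1}`. -/
def IsSwitchingFlow (A : Arrival V) (x : SFlow V) : Prop :=
  x.yard = 1 ∧ (∀ v : V, x.out v = SFlow.into A x (Sum.inl v)) ∧
    ∀ v : V, x.od v ≤ x.ev v ∧ x.ev v ≤ x.od v + 1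


namespace ArrivalAux
open Arrival

variable {V : Type} [Fintype V] [DecidableEq V]

lemma run_succ (A : Arrival V) (k : ℕ) : A.run (k+1) = A.runStep (A.run k) :=
  Function.iterate_succ_apply' _ _ _

lemma runStep_fix (A : Arrival V) (s : (V ⊕ Bool) × (V → Bool)) (b : Bool)
    (h : s.1 = Sum.inr b) : A.runStep s = s := by
  obtain ⟨p, sw⟩ := s
  simp only at h
  subst h
  rfl

lemma runStep_inl (A : Arrival V) (s : (V ⊕ Bool) × (V → Bool)) (v : V)
    (h : s.1 = Sum.inl v) :
    A.runStep s = ((if s.2 v then A.sOdd v else A.sEven v),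
      fun u => if u = v then !s.2 v else s.2 u) := by
  obtain ⟨p, sw⟩ := s
  simp only at h
  subst h
  rfl

lemma run_absorbed (A : Arrival V) {k : ℕ} {b : Bool} (h : (A.run k).1 = Sum.inr b) :
    ∀ m, k ≤ m → A.run m = A.run k := by
  intro m hm
  induction m, hm using Nat.le_induction with
  | base => rfl
  | succ n hn ih =>
    rw [run_succ, ih, runStep_fix A _ b h]

/-- The run profile increment. -/
def bump (s : (V ⊕ Bool) × (V → Bool)) (x : SFlow V) : SFlow V :=
  match s.1 with
  | Sum.inr _ => x
  | Sum.inl v =>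
    if s.2 v then ⟨x.yard, x.ev, Function.update x.od v (x.od v + 1)⟩
    else ⟨x.yard, Function.update x.ev v (x.ev v + 1), x.od⟩

/-- The run profile after `k` steps. -/
def profile (A : Arrival V) : ℕ → SFlow V
  | 0 => ⟨1, fun _ => 0, fun _ => 0⟩
  | k+1 => bump (A.run k) (profile A k)

lemma bump_inr (s : (V ⊕ Bool) × (V → Bool)) (x : SFlow V) (b : Bool)
    (h : s.1 = Sum.inr b) : bump s x = x := by
  unfold bump; rw [h]

lemma bump_inl (s : (V ⊕ Bool) × (V → Bool)) (x : SFlow V) (v : V)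
    (h : s.1 = Sum.inl v) :
    bump s x = if s.2 v then SFlow.mk x.yard x.ev (Function.update x.od v (x.od v + 1))
      else SFlow.mk x.yard (Function.update x.ev v (x.ev v + 1)) x.od := by
  unfold bump; rw [h]

lemma profile_yard (A : Arrival V) (k : ℕ) : (profile A k).yard = 1 := by
  induction k with
  | zero => rfl
  | succ k ih =>
    show (bump (A.run k) (profile A k)).yard = 1
    rcases h : (A.run k).1 with v | b
    · rw [bump_inl _ _ v h]; split <;> simpa using ih
    · rw [bump_inr _ _ b h]; exact ih

lemma into_updEv (A : Arrival V) (x : SFlow V) (v : V) (u : V ⊕ Bool) :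
    SFlow.into A ⟨x.yard, Function.update x.ev v (x.ev v + 1), x.od⟩ u
      = SFlow.into A x u + (if A.sEven v = u then 1 else 0) := by
  unfold SFlow.into
  simp only
  have : ∀ w ∈ Finset.univ,
      ((if A.sEven w = u then Function.update x.ev v (x.ev v + 1) w else 0)
        + (if A.sOdd w = u then x.od w else 0))
      = ((if A.sEven w = u then x.ev w else 0) + (if A.sOdd w = u then x.od w else 0))
        + (if w = v then (if A.sEven v = u then 1 else 0) else 0) := by
    intro w _
    rcases eq_or_ne w v with rfl | hw
    · simp only [Function.update_self, if_pos rfl]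
      split_ifs <;> omega
    · simp [Function.update_of_ne hw, hw]
  rw [Finset.sum_congr rfl this, Finset.sum_add_distrib, Finset.sum_ite_eq' Finset.univ v]
  simp only [Finset.mem_univ, if_pos]
  ring

lemma into_updOd (A : Arrival V) (x : SFlow V) (v : V) (u : V ⊕ Bool) :
    SFlow.into A ⟨x.yard, x.ev, Function.update x.od v (x.od v + 1)⟩ u
      = SFlow.into A x u + (if A.sOdd v = u then 1 else 0) := by
  unfold SFlow.into
  simp only
  have : ∀ w ∈ Finset.univ,
      ((if A.sEven w = u then x.ev w else 0)
        + (if A.sOdd w = u then Function.update x.od v (x.od v + 1) w else 0))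
      = ((if A.sEven w = u then x.ev w else 0) + (if A.sOdd w = u then x.od w else 0))
        + (if w = v then (if A.sOdd v = u then 1 else 0) else 0) := by
    intro w _
    rcases eq_or_ne w v with rfl | hw
    · simp only [Function.update_self, if_pos rfl]
      split_ifs <;> omega
    · simp [Function.update_of_ne hw, hw]
  rw [Finset.sum_congr rfl this, Finset.sum_add_distrib, Finset.sum_ite_eq' Finset.univ v]
  simp only [Finset.mem_univ, if_pos]
  ring

/-- Key invariants of the run profile. -/
lemma profile_inv (A : Arrival V) (k : ℕ) :
    (∀ v : V, (profile A k).ev v = (profile A k).od v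
        + (if (A.run k).2 v then 1 else 0)) ∧
    (∀ u : V ⊕ Bool, SFlow.into A (profile A k) u
      = (if (A.run k).1 = u then 1 else 0)
        + Sum.elim (fun v => (profile A k).out v) (fun _ => 0) u) := by
  induction k with
  | zero =>
    constructor
    · intro v; simp [profile, Arrival.run]
    · intro u
      have h0 : (A.run 0).1 = Sum.inl A.o := rfl
      rw [h0]
      cases u with
      | inl w => simp [profile, SFlow.into, SFlow.out]
      | inr b => simp [profile, SFlow.into]
  | succ k ih =>
    obtain ⟨hbal, hcons⟩ := ih
    rcases hpos : (A.run k).1 with v | b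
    · -- proper step at v
      have hrs := runStep_inl A (A.run k) v hpos
      have hpos' : (A.run (k+1)).1 = (if (A.run k).2 v then A.sOdd v else A.sEven v) := by
        rw [run_succ, hrs]
      have hsw : (A.run (k+1)).2 = fun u => if u = v then !(A.run k).2 v else (A.run k).2 u := by
        rw [run_succ, hrs]
      have hpr : profile A (k+1) = bump (A.run k) (profile A k) := rfl
      rw [bump_inl _ _ v hpos] at hpr
      cases sv : (A.run k).2 v with
      | false =>
        rw [sv] at hpr hpos'
        simp only [if_neg Bool.false_ne_true, if_false] at hpr hpos'
        constructor
        · intro w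
          rw [hpr, hsw]
          rcases eq_or_ne w v with rfl | hw
          · have := hbal w
            simp only [Function.update_self, if_pos rfl, sv]
            simp only [sv] at this
            simp at this ⊢
            omega
          · simp only [Function.update_of_ne hw, if_neg hw]
            exact hbal w
        · intro u
          rw [hpr, into_updEv, hcons u, hpos, hpos']
          cases u with
          | inl w =>
            simp only [Sum.elim_inl, SFlow.out]
            rcases eq_or_ne w v with rfl | hw
            · simp only [Function.update_self, if_pos rfl]
              split_ifs <;> omega
            · simp only [Function.update_of_ne hw]
              have hne : (Sum.inl v : V ⊕ Bool) ≠ Sum.inl w := by simpa using (Ne.symm hw)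
              rw [if_neg hne]
              split_ifs <;> omega
          | inr b =>
            have hne : (Sum.inl v : V ⊕ Bool) ≠ Sum.inr b := by simp
            rw [if_neg hne]
            simp only [Sum.elim_inr]
            split_ifs <;> omega
      | true =>
        rw [sv] at hpr hpos'
        simp only [if_pos rfl, if_true] at hpr hpos'
        constructor
        · intro w
          rw [hpr, hsw]
          rcases eq_or_ne w v with rfl | hw
          · have := hbal w
            simp only [Function.update_self, if_pos rfl, sv]
            simp only [sv] at this
            simp at this ⊢
            omega
          · simp only [Function.update_of_ne hw, if_neg hw]
            exact hbal w
        · intro u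
          rw [hpr, into_updOd, hcons u, hpos, hpos']
          cases u with
          | inl w =>
            simp only [Sum.elim_inl, SFlow.out]
            rcases eq_or_ne w v with rfl | hw
            · simp only [Function.update_self, if_pos rfl]
              split_ifs <;> omega
            · simp only [Function.update_of_ne hw]
              have hne : (Sum.inl v : V ⊕ Bool) ≠ Sum.inl w := by simpa using (Ne.symm hw)
              rw [if_neg hne]
              split_ifs <;> omega
          | inr b =>
            have hne : (Sum.inl v : V ⊕ Bool) ≠ Sum.inr b := by simp
            rw [if_neg hne]
            simp only [Sum.elim_inr]
            split_ifs <;> omega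
    · -- absorbed
      have h1 : A.run (k+1) = A.run k := by
        rw [run_succ, runStep_fix A _ b hpos]
      have h2 : profile A (k+1) = profile A k := bump_inr _ _ b hpos
      rw [h1, h2]
      exact ⟨hbal, hcons⟩

lemma profile_isSF (A : Arrival V) {k : ℕ} {b : Bool} (h : (A.run k).1 = Sum.inr b) :
    IsSwitchingFlow A (profile A k) ∧ SFlow.into A (profile A k) (Sum.inr b) = 1 := by
  obtain ⟨hbal, hcons⟩ := profile_inv A k
  refine ⟨⟨profile_yard A k, ?_, ?_⟩, ?_⟩
  · intro v
    have := hcons (Sum.inl v)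
    rw [h] at this
    simpa using this.symm
  · intro v
    have := hbal v
    split_ifs at this <;> omega
  · have := hcons (Sum.inr b)
    rw [h] at this
    simpa using this

lemma into_mono (A : Arrival V) {x y : SFlow V} (hy : x.yard = y.yard)
    (h : ∀ v, x.ev v ≤ y.ev v ∧ x.od v ≤ y.od v) (u : V ⊕ Bool) :
    SFlow.into A x u ≤ SFlow.into A y u := by
  unfold SFlow.into
  apply Nat.add_le_add
  · rw [hy]
  · apply Finset.sum_le_sum
    intro w _
    apply Nat.add_le_add <;> split_ifs <;> simp [(h w).1, (h w).2]

/-- Any switching flow dominates the run profile, edgewise. -/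
lemma profile_le (A : Arrival V) {x : SFlow V} (hx : IsSwitchingFlow A x) (k : ℕ) :
    ∀ v, (profile A k).ev v ≤ x.ev v ∧ (profile A k).od v ≤ x.od v := by
  induction k with
  | zero => intro v; simp [profile]
  | succ k ih =>
    rcases hpos : (A.run k).1 with v | b
    · have hcons := (profile_inv A k).2 (Sum.inl v)
      rw [hpos] at hcons
      simp at hcons
      have hmono := into_mono A (by rw [profile_yard, hx.1]) ih (Sum.inl v)
      have hout : (profile A k).out v + 1 ≤ x.out v := by
        have := hx.2.1 v
        omega
      have hbal := (profile_inv A k).1 v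
      have hbd := hx.2.2 v
      have hpr : profile A (k+1) = bump (A.run k) (profile A k) := rfl
      rw [bump_inl _ _ v hpos] at hpr
      unfold SFlow.out at hout
      cases sv : (A.run k).2 v with
      | false =>
        rw [sv] at hpr hbal
        simp only [if_neg Bool.false_ne_true, if_false] at hpr hbal
        intro w
        rw [hpr]
        rcases eq_or_ne w v with rfl | hw
        · simp only [Function.update_self]
          have := ih w
          omega
        · simp only [Function.update_of_ne hw]
          exact ih w
      | true =>
        rw [sv] at hpr hbal
        simp only [if_pos rfl, if_true] at hpr hbal
        intro w
        rw [hpr]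
        rcases eq_or_ne w v with rfl | hw
        · simp only [Function.update_self]
          have := ih w
          omega
        · simp only [Function.update_of_ne hw]
          exact ih w
    · have h2 : profile A (k+1) = profile A k := bump_inr _ _ b hpos
      rw [h2]; exact ih

/-- Every switching flow sends exactly one unit into the destinations. -/
lemma into_dest_sum (A : Arrival V) {x : SFlow V} (hx : IsSwitchingFlow A x) :
    SFlow.into A x (Sum.inr false) + SFlow.into A x (Sum.inr true) = 1 := by
  have htot : ∑ u : V ⊕ Bool, SFlow.into A x u = x.yard + ∑ v : V, (x.ev v + x.od v) := by
    unfold SFlow.into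
    rw [Finset.sum_add_distrib]
    congr 1
    · rw [Finset.sum_ite_eq Finset.univ (Sum.inl A.o) (fun _ => x.yard)]
      simp
    · rw [Finset.sum_comm]
      apply Finset.sum_congr rfl
      intro v _
      rw [Finset.sum_add_distrib,
        Finset.sum_ite_eq Finset.univ (A.sEven v) (fun _ => x.ev v),
        Finset.sum_ite_eq Finset.univ (A.sOdd v) (fun _ => x.od v)]
      simp
  rw [Fintype.sum_sum_type] at htot
  have hV : ∑ v : V, SFlow.into A x (Sum.inl v) = ∑ v : V, (x.ev v + x.od v) := by
    apply Finset.sum_congr rfl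
    intro v _
    rw [← hx.2.1 v]
    rfl
  rw [hV, Fintype.sum_bool] at htot
  have := hx.1
  omega

/-- A terminating instance's run reaches a destination. -/
lemma terminates (A : Arrival V) (hA : A.Terminating) :
    ∃ k b, (A.run k).1 = Sum.inr b := by
  by_contra hno
  push_neg at hno
  have hinl : ∀ k, ∃ v, (A.run k).1 = Sum.inl v := by
    intro k
    rcases h : (A.run k).1 with v | b
    · exact ⟨v, rfl⟩
    · exact absurd h (hno k b)
  obtain ⟨a, c, hne, heq⟩ : ∃ a c, a ≠ c ∧ A.run a = A.run c :=
    Finite.exists_ne_map_eq_of_infinite (A.run)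
  obtain ⟨i, j, hlt, hij⟩ : ∃ i j, i < j ∧ A.run i = A.run j := by
    rcases lt_or_gt_of_ne hne with h | h
    · exact ⟨a, c, h, heq⟩
    · exact ⟨c, a, h, heq.symm⟩
  set p := j - i with hp
  have hppos : 0 < p := by omega
  have run_add : ∀ a b : ℕ, A.run (a + b) = A.runStep^[a] (A.run b) := by
    intro a b
    rw [Arrival.run, Arrival.run, ← Function.iterate_add_apply]
  have hper : ∀ m, i ≤ m → A.run (m + p) = A.run m := by
    intro m hm
    have h1 : A.run (i + p) = A.run i := by
      have : i + p = j := by omega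
      rw [this, hij]
    calc A.run (m + p) = A.runStep^[m - i] (A.run (i + p)) := by
          rw [← run_add]; congr 1; omega
      _ = A.runStep^[m - i] (A.run i) := by rw [h1]
      _ = A.run m := by rw [← run_add]; congr 1; omega
  set P : V ⊕ Bool → Prop := fun u => ∃ m, i ≤ m ∧ (A.run m).1 = u with hP
  have hclosed : ∀ v, P (Sum.inl v) → P (A.sEven v) ∧ P (A.sOdd v) := by
    rintro v ⟨m, him, hm⟩
    have hrevisit : (A.run (m + p)).1 = Sum.inl v := by rw [hper m him, hm]
    set Q : ℕ → Prop := fun n => m < n ∧ (A.run n).1 = Sum.inl v with hQdef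
    haveI : DecidablePred Q := Classical.decPred Q
    have hQex : ∃ n, Q n := ⟨m + p, by omega, hrevisit⟩
    set m1 := Nat.find hQex with hm1def
    obtain ⟨hmm1, hm1pos⟩ : m < m1 ∧ (A.run m1).1 = Sum.inl v := Nat.find_spec hQex
    have hmin : ∀ n, m < n → n < m1 → (A.run n).1 ≠ Sum.inl v := by
      intro n h1 h2 h3
      exact Nat.find_min hQex h2 ⟨h1, h3⟩
    have hconst : ∀ n, m + 1 ≤ n → n ≤ m1 → (A.run n).2 v = !(A.run m).2 v := by
      intro n hn
      induction n, hn using Nat.le_induction with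
      | base =>
        intro _
        rw [run_succ, runStep_inl A _ v hm]
        simp
      | succ n hn ih =>
        intro hle
        have h1 : (A.run n).1 ≠ Sum.inl v := hmin n (by omega) (by omega)
        have h2 : (A.run (n+1)).2 v = (A.run n).2 v := by
          rcases hq : (A.run n).1 with w | b
          · rw [run_succ, runStep_inl A _ w hq]
            have : v ≠ w := by
              intro hvw
              exact h1 (by rw [hq, hvw])
            simp [this]
          · rw [run_succ, runStep_fix A _ b hq]
        rw [h2]
        exact ih (by omega)
    have hflip : (A.run m1).2 v = !(A.run m).2 v := hconst m1 (by omega) le_rfl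
    have hpos1 : (A.run (m + 1)).1 = (if (A.run m).2 v then A.sOdd v else A.sEven v) := by
      rw [run_succ, runStep_inl A _ v hm]
    have hpos2 : (A.run (m1 + 1)).1 = (if (A.run m1).2 v then A.sOdd v else A.sEven v) := by
      rw [run_succ, runStep_inl A _ v hm1pos]
    have hP1 : P (A.run (m + 1)).1 := ⟨m + 1, by omega, rfl⟩
    have hP2 : P (A.run (m1 + 1)).1 := ⟨m1 + 1, by omega, rfl⟩
    rw [hpos1] at hP1
    rw [hpos2, hflip] at hP2
    cases hsv : (A.run m).2 v with
    | false =>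
      rw [hsv] at hP1 hP2
      simp only [Bool.not_false, if_true, if_neg Bool.false_ne_true, if_false] at hP1 hP2
      exact ⟨hP1, hP2⟩
    | true =>
      rw [hsv] at hP1 hP2
      simp only [Bool.not_true, if_pos rfl, if_neg Bool.false_ne_true, if_false] at hP1 hP2
      exact ⟨hP2, hP1⟩
  have hinlP : ∀ u, P u → ∃ v, u = Sum.inl v := by
    rintro u ⟨m, _, hm⟩
    rcases h : u with v | b
    · exact ⟨v, rfl⟩
    · subst h; exact absurd hm (hno m b)
  have hnopath : ∀ n u, P u → ¬ A.PathLen u DestP n := by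
    intro n
    induction n with
    | zero =>
      rintro u hu ⟨f, hf0, hfP, -⟩
      obtain ⟨v, rfl⟩ := hinlP u hu
      obtain ⟨t, ht⟩ := hfP
      rw [hf0] at ht
      exact Sum.inl_ne_inr ht
    | succ n ih =>
      rintro u hu ⟨f, hf0, hfP, hfE⟩
      obtain ⟨v, rfl⟩ := hinlP u hu
      obtain ⟨w, hw, hor⟩ := hfE 0 (Nat.succ_pos n)
      rw [hf0] at hw
      obtain rfl : v = w := by injection hw
      have h1 : P (f 1) := by
        rcases hor with h | h
        · rw [h]; exact (hclosed v hu).1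
        · rw [h]; exact (hclosed v hu).2
      exact ih (f 1) h1 ⟨fun i => f (i + 1), rfl, hfP, fun i hi => hfE (i + 1) (by omega)⟩
  obtain ⟨v, hv⟩ := hinl i
  obtain ⟨n, hn⟩ := hA v
  exact hnopath n _ ⟨i, le_rfl, hv⟩ hn

end ArrivalAux

/-- The run procedure outputs destination `t` iff there is a switching flow to `t`. -/
theorem switching_flows_are_certificates (A : Arrival V) (hA : A.Terminating) (t : Bool) :
    (∃ k : ℕ, (A.run k).1 = Sum.inr t) ↔
      ∃ x : SFlow V, IsSwitchingFlow A x ∧ SFlow.into A x (Sum.inr t) = 1 := by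
  constructor
  · rintro ⟨k, hk⟩
    obtain ⟨h1, h2⟩ := ArrivalAux.profile_isSF A hk
    exact ⟨_, h1, h2⟩
  · rintro ⟨x, hx, hxt⟩
    obtain ⟨k, b, hk⟩ := ArrivalAux.terminates A hA
    obtain ⟨h1, h2⟩ := ArrivalAux.profile_isSF A hk
    have hle : SFlow.into A (ArrivalAux.profile A k) (Sum.inr b) ≤ SFlow.into A x (Sum.inr b) :=
      ArrivalAux.into_mono A (by rw [ArrivalAux.profile_yard, hx.1]) (ArrivalAux.profile_le A hx k) _
    have hsum := ArrivalAux.into_dest_sum A hx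
    have hbt : b = t := by
      by_contra hne
      cases b <;> cases t <;> simp_all <;> omega
    exact ⟨k, by rw [hk, hbt]⟩
end

section
/- For a terminating ARRIVAL instance, every switching flow x satisfies exactly one of x⁻(d) = 1, x⁻(d̄) = 1; that is, a switching flow is a switching flow to exactly one destination. -/
variable {V : Type} [Fintype V] [DecidableEq V]

/-- Every switching flow of a terminating instance is a switching flow to exactly one
of the two destinations `d = Sum.inr false` and `d̄ = Sum.inr true`. -/
theorem switching_flow_exactly_one_destination (A : Arrival V) (hA : A.Terminating)
    (x : SFlow V) (hx : IsSwitchingFlow A x) :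
    Xor' (SFlow.into A x (Sum.inr false) = 1) (SFlow.into A x (Sum.inr true) = 1) := by
  obtain ⟨hy, hcons, _⟩ := hx
  have key : SFlow.into A x (Sum.inr false) + SFlow.into A x (Sum.inr true) = 1 := by
    have htot : ∑ u : V ⊕ Bool, SFlow.into A x u = x.yard + ∑ v : V, (x.ev v + x.od v) := by
      unfold SFlow.into
      rw [Finset.sum_add_distrib]
      congr 1
      · simp [Finset.sum_ite_eq]
      · rw [Finset.sum_comm]
        congr 1; ext v
        rw [Finset.sum_add_distrib]
        simp [Finset.sum_ite_eq]
    rw [Fintype.sum_sum_type] at htot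
    have hV : ∑ v : V, SFlow.into A x (Sum.inl v) = ∑ v : V, (x.ev v + x.od v) := by
      apply Finset.sum_congr rfl
      intro v _
      exact (hcons v).symm
    rw [hV] at htot
    have hB : ∑ b : Bool, SFlow.into A x (Sum.inr b)
        = SFlow.into A x (Sum.inr false) + SFlow.into A x (Sum.inr true) := by
      simp [Fintype.sum_bool, Nat.add_comm]
    omega
  rcases Nat.eq_zero_or_pos (SFlow.into A x (Sum.inr false)) with h0 | h1
  · right; omega
  · left; omega
end

section
/- There do not exist, for the same terminating ARRIVAL instance, both a switching flow to d and a switching flow to d̄. -/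
set_option linter.unusedSectionVars false


variable {V : Type} [Fintype V] [DecidableEq V]

-- AUX START
def Arrival.target (A : Arrival V) (v : V) (b : Bool) : V ⊕ Bool :=
  if b then A.sOdd v else A.sEven v

def SFlow.bump {V : Type} [DecidableEq V] (p : SFlow V) (v : V) (b : Bool) : SFlow V :=
  if b then ⟨p.yard, p.ev, fun w => if w = v then p.od w + 1 else p.od w⟩
  else ⟨p.yard, fun w => if w = v then p.ev w + 1 else p.ev w, p.od⟩

def Arrival.prof (A : Arrival V) : ℕ → SFlow V
  | 0 => ⟨1, fun _ => 0, fun _ => 0⟩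
  | (k+1) =>
    match (A.run k).1 with
    | Sum.inr _ => A.prof k
    | Sum.inl v => (A.prof k).bump v ((A.run k).2 v)

lemma run_absorb (A : Arrival V) {k : ℕ} {t : Bool} (h : (A.run k).1 = Sum.inr t) :
    A.run (k+1) = A.run k := by
  rw [run_succ, Arrival.runStep, h]

lemma run_stable (A : Arrival V) {k : ℕ} {t : Bool} (h : (A.run k).1 = Sum.inr t) :
    ∀ j, k ≤ j → (A.run j).1 = Sum.inr t := by
  intro j hj
  induction j with
  | zero => have hk : k = 0 := by omega
            subst hk; exact h
  | succ n ih =>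
    rcases Nat.lt_or_ge k (n+1) with h1 | h1
    · have hn := ih (by omega)
      rw [run_absorb A hn]; exact hn
    · have : k = n + 1 := by omega
      subst this; exact h

lemma run_step_inl (A : Arrival V) {k : ℕ} {v : V} (h : (A.run k).1 = Sum.inl v) :
    A.run (k+1) = (A.target v ((A.run k).2 v),
      fun u => if u = v then !(A.run k).2 v else (A.run k).2 u) := by
  rw [run_succ, Arrival.runStep, h, Arrival.target]

lemma bump_yard (p : SFlow V) (v : V) (b : Bool) : (p.bump v b).yard = p.yard := by
  cases b <;> rfl

lemma bump_ev (p : SFlow V) (v : V) (b : Bool) (w : V) :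
    (p.bump v b).ev w = p.ev w + (if w = v ∧ b = false then 1 else 0) := by
  cases b <;> by_cases h : w = v <;> simp [SFlow.bump, h]

lemma bump_od (p : SFlow V) (v : V) (b : Bool) (w : V) :
    (p.bump v b).od w = p.od w + (if w = v ∧ b = true then 1 else 0) := by
  cases b <;> by_cases h : w = v <;> simp [SFlow.bump, h]

lemma bump_out (p : SFlow V) (v : V) (b : Bool) (w : V) :
    (p.bump v b).out w = p.out w + (if w = v then 1 else 0) := by
  simp only [SFlow.out, bump_ev, bump_od]
  cases b <;> by_cases h : w = v <;> simp [h] <;> omega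

lemma into_bump (A : Arrival V) (p : SFlow V) (v : V) (b : Bool) (u : V ⊕ Bool) :
    SFlow.into A (p.bump v b) u = SFlow.into A p u + (if A.target v b = u then 1 else 0) := by
  classical
  simp only [SFlow.into, bump_yard]
  have key : ∀ w : V,
      (if A.sEven w = u then (p.bump v b).ev w else 0) +
        (if A.sOdd w = u then (p.bump v b).od w else 0)
      = ((if A.sEven w = u then p.ev w else 0) + (if A.sOdd w = u then p.od w else 0))
        + (if w = v then (if A.target v b = u then 1 else 0) else 0) := by
    intro w
    rcases eq_or_ne w v with h | h
    · subst h
      cases b <;>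
        simp only [bump_ev, bump_od, Arrival.target, if_true, if_false] <;>
        by_cases h1 : A.sEven w = u <;> by_cases h2 : A.sOdd w = u <;>
        simp [h1, h2] <;> omega
    · simp [bump_ev, bump_od, h]
  rw [Finset.sum_congr rfl fun w _ => key w, Finset.sum_add_distrib,
    Finset.sum_ite_eq' Finset.univ v (fun _ => if A.target v b = u then 1 else 0)]
  simp [add_assoc]

lemma total_bump (p : SFlow V) (v : V) (b : Bool) :
    (p.bump v b).total = p.total + 1 := by
  simp only [SFlow.total, bump_yard]
  have : ∀ w : V, (p.bump v b).ev w + (p.bump v b).od w = (p.ev w + p.od w) + (if w = v then 1 else 0) := by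
    intro w
    have := bump_out p v b w
    simpa [SFlow.out] using this
  rw [Finset.sum_congr rfl fun w _ => this w, Finset.sum_add_distrib,
    Finset.sum_ite_eq' Finset.univ v (fun _ => 1)]
  simp [add_assoc]

lemma into_mono (A : Arrival V) {p x : SFlow V} (h0 : p.yard ≤ x.yard)
    (h1 : ∀ v, p.ev v ≤ x.ev v) (h2 : ∀ v, p.od v ≤ x.od v) (u : V ⊕ Bool) :
    SFlow.into A p u ≤ SFlow.into A x u := by
  unfold SFlow.into
  gcongr with v hv
  · split <;> simp [h0]
  · split <;> simp [h1 v]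
  · split <;> simp [h2 v]

/-- The main invariant of the run. -/
lemma run_invariant (A : Arrival V) (k : ℕ) :
    ((A.prof k).yard = 1) ∧
    (∀ v, (A.prof k).ev v = (A.prof k).od v + (if (A.run k).2 v then 1 else 0)) ∧
    (∀ v, SFlow.into A (A.prof k) (Sum.inl v)
        = (A.prof k).out v + (if (A.run k).1 = Sum.inl v then 1 else 0)) ∧
    (∀ t, (A.run k).1 = Sum.inr t → 1 ≤ SFlow.into A (A.prof k) (Sum.inr t)) := by
  induction k with
  | zero =>
    refine ⟨rfl, by simp [Arrival.prof, Arrival.run], ?_, by simp [Arrival.run]⟩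
    intro v
    simp [Arrival.prof, Arrival.run, SFlow.into, SFlow.out]
  | succ k ih =>
    obtain ⟨iy, i1, i2, i3⟩ := ih
    cases h : (A.run k).1 with
    | inr t =>
      have hr : A.run (k+1) = A.run k := run_absorb A h
      have hp : A.prof (k+1) = A.prof k := by rw [Arrival.prof, h]
      rw [hr, hp]; exact ⟨iy, i1, i2, i3⟩
    | inl v =>
      have hp : A.prof (k+1) = (A.prof k).bump v ((A.run k).2 v) := by rw [Arrival.prof, h]
      have hr := run_step_inl A h
      refine ⟨by rw [hp, bump_yard]; exact iy, ?_, ?_, ?_⟩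
      · intro w
        have h1 := i1 w
        rw [hp, hr, bump_ev, bump_od]
        rcases eq_or_ne w v with hw | hw
        · subst hw
          cases hc : (A.run k).2 w <;> simp [hc] at h1 ⊢ <;> omega
        · simp only [hw, false_and, if_false, add_zero]
          simpa [hw] using h1
      · intro w
        rw [hp, hr, into_bump, bump_out, i2 w, h]
        have hiff : ((Sum.inl v : V ⊕ Bool) = Sum.inl w) = (w = v) := by
          simp [eq_comm]
        simp only [hiff]
        try ring
      · intro t ht
        rw [hp, into_bump]
        rw [hr] at ht
        simp only at ht
        rw [ht]
        simp
  -- done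
-- AUX END

lemma prof_le (A : Arrival V) {x : SFlow V} (hx : IsSwitchingFlow A x) (k : ℕ) :
    (A.prof k).yard ≤ x.yard ∧ ∀ v, (A.prof k).ev v ≤ x.ev v ∧ (A.prof k).od v ≤ x.od v := by
  obtain ⟨hy, hc, hs⟩ := hx
  induction k with
  | zero =>
    exact ⟨by simp [Arrival.prof, hy], fun v => by simp [Arrival.prof]⟩
  | succ k ih =>
    obtain ⟨ihy, ihv⟩ := ih
    cases h : (A.run k).1 with
    | inr t => rw [Arrival.prof, h]; exact ⟨ihy, ihv⟩
    | inl v =>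
      have hp : A.prof (k+1) = (A.prof k).bump v ((A.run k).2 v) := by rw [Arrival.prof, h]
      obtain ⟨_, i1, i2, _⟩ := run_invariant A k
      have hmono := into_mono A ihy (fun w => (ihv w).1) (fun w => (ihv w).2) (Sum.inl v)
      have hkey : (A.prof k).out v + 1 ≤ x.out v := by
        have h2 := i2 v
        rw [h] at h2
        simp at h2
        rw [← hc v] at hmono
        omega
      refine ⟨by rw [hp, bump_yard]; exact ihy, fun w => ?_⟩
      rw [hp, bump_ev, bump_od]
      rcases eq_or_ne w v with hw | hw
      · subst hw
        have h1 := i1 w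
        have hse := hs w
        have hiv := ihv w
        simp only [SFlow.out] at hkey
        cases hc2 : (A.run k).2 w <;> simp [hc2] at h1 ⊢ <;> omega
      · simp only [hw, false_and, if_false, add_zero]
        exact ihv w

lemma total_le {p x : SFlow V} (h0 : p.yard ≤ x.yard)
    (h1 : ∀ v, p.ev v ≤ x.ev v) (h2 : ∀ v, p.od v ≤ x.od v) : p.total ≤ x.total := by
  exact add_le_add h0 (Finset.sum_le_sum fun v _ => add_le_add (h1 v) (h2 v))

lemma prof_total (A : Arrival V) (k : ℕ) (h : ∃ v, (A.run k).1 = Sum.inl v) :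
    (A.prof k).total = k + 1 := by
  induction k with
  | zero => simp [Arrival.prof, SFlow.total]
  | succ k ih =>
    cases hk : (A.run k).1 with
    | inr t =>
      obtain ⟨v, hv⟩ := h
      rw [run_stable A hk (k+1) (by omega)] at hv; cases hv
    | inl v =>
      rw [Arrival.prof, hk, total_bump, ih ⟨v, hk⟩]

lemma into_sum (A : Arrival V) (x : SFlow V) :
    ∑ u : V ⊕ Bool, SFlow.into A x u = x.total := by
  unfold SFlow.into SFlow.total
  rw [Finset.sum_add_distrib]
  congr 1
  · rw [Finset.sum_ite_eq Finset.univ (Sum.inl A.o : V ⊕ Bool) (fun _ => x.yard)]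
    simp
  · rw [Finset.sum_comm]
    refine Finset.sum_congr rfl fun v _ => ?_
    rw [Finset.sum_add_distrib,
      Finset.sum_ite_eq Finset.univ (A.sEven v) (fun _ => x.ev v),
      Finset.sum_ite_eq Finset.univ (A.sOdd v) (fun _ => x.od v)]
    simp

lemma dest_sum (A : Arrival V) {x : SFlow V} (hx : IsSwitchingFlow A x) :
    SFlow.into A x (Sum.inr false) + SFlow.into A x (Sum.inr true) = x.yard := by
  obtain ⟨hy, hc, _⟩ := hx
  have h := into_sum A x
  rw [Fintype.sum_sum_type] at h
  have h2 : ∑ v : V, SFlow.into A x (Sum.inl v) = ∑ v : V, (x.ev v + x.od v) := by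
    refine Finset.sum_congr rfl fun v _ => ?_
    rw [← hc v]; rfl
  rw [h2] at h
  simp only [SFlow.total, Fintype.sum_bool] at h
  omega

lemma run_reaches (A : Arrival V) {x : SFlow V} (hx : IsSwitchingFlow A x) :
    ∃ k t, (A.run k).1 = Sum.inr t ∧ 1 ≤ SFlow.into A x (Sum.inr t) := by
  obtain ⟨hd, hv⟩ := prof_le A hx x.total
  cases h : (A.run x.total).1 with
  | inr t =>
    obtain ⟨_, _, _, i3⟩ := run_invariant A x.total
    exact ⟨x.total, t, h, le_trans (i3 t h)
      (into_mono A hd (fun w => (hv w).1) (fun w => (hv w).2) _)⟩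
  | inl v =>
    have h1 : (A.prof x.total).total = x.total + 1 := prof_total A _ ⟨v, h⟩
    have h2 : (A.prof x.total).total ≤ x.total :=
      total_le hd (fun w => (hv w).1) (fun w => (hv w).2)
    omega

theorem no_switching_flows_to_both' (A : Arrival V) :
    ¬ ((∃ x : SFlow V, IsSwitchingFlow A x ∧ SFlow.into A x (Sum.inr false) = 1) ∧
        (∃ y : SFlow V, IsSwitchingFlow A y ∧ SFlow.into A y (Sum.inr true) = 1)) := by
  rintro ⟨⟨x, hx, hxd⟩, ⟨y, hy, hyd⟩⟩
  obtain ⟨k, t, hk, hxt⟩ := run_reaches A hx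
  obtain ⟨k', t', hk', hyt⟩ := run_reaches A hy
  have hxs := dest_sum A hx
  have hys := dest_sum A hy
  rw [hx.1] at hxs
  rw [hy.1] at hys
  have ht : t = false := by
    cases t with
    | false => rfl
    | true => rw [hxd] at hxs; omega
  have ht' : t' = true := by
    cases t' with
    | true => rfl
    | false => rw [hyd] at hys; omega
  subst ht; subst ht'
  rcases le_total k k' with hkk | hkk
  · have := run_stable A hk k' hkk
    rw [hk'] at this
    simp at this
  · have := run_stable A hk' k hkk
    rw [hk] at this
    simp at this

/-- There cannot be both a switching flow to `d` and a switching flow to `d̄`. -/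
theorem no_switching_flows_to_both (A : Arrival V) (hA : A.Terminating) :
    ¬ ((∃ x : SFlow V, IsSwitchingFlow A x ∧ SFlow.into A x (Sum.inr false) = 1) ∧
        (∃ y : SFlow V, IsSwitchingFlow A y ∧ SFlow.into A y (Sum.inr true) = 1)) :=
  no_switching_flows_to_both' A
end

section
/- The Multi-Run procedure on a terminating ARRIVAL instance terminates: for any subset S ⊆ V, any nonnegative integer starting numbers w, and any nondeterministic choices of vertices and batch sizes, after finitely many iterations no trains remain waiting at vertices of V \ S. -/
variable {V : Type} [Fintype V] [DecidableEq V]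

/-- State of the Multi-Run procedure: `ev/od` count edge traversals so far,
`t` counts trains currently present at each vertex, and `sw v = true` means the
current successor of `v` is the odd one. -/
structure MState (V : Type) where
  ev : V → ℕ
  od : V → ℕ
  t : V ⊕ Bool → ℕ
  sw : V → Bool

/-- Current successor. -/
def Arrival.curr (A : Arrival V) (s : MState V) (v : V) : V ⊕ Bool :=
  if s.sw v then A.sOdd v else A.sEven v

/-- Next successor. -/
def Arrival.nxt (A : Arrival V) (s : MState V) (v : V) : V ⊕ Bool :=
  if s.sw v then A.sEven v else A.sOdd v

/-- Initial state of the Multi-Run procedure: one train is started from the yard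
(arriving at `o`) and `w v` trains are started from each `v ∈ S`, with `⌈w v/2⌉`
moving to the even successor and `⌊w v/2⌋` to the odd successor. -/
def mInit (A : Arrival V) (S : Finset V) (w : V → ℕ) : MState V where
  ev := fun v => if v ∈ S then (w v + 1) / 2 else 0
  od := fun v => if v ∈ S then w v / 2 else 0
  t := fun u => (if Sum.inl A.o = u then 1 else 0) +
      ∑ v ∈ S, ((if A.sEven v = u then (w v + 1) / 2 else 0) +
        (if A.sOdd v = u then w v / 2 else 0))
  sw := fun _ => false

/-- One iteration of the Multi-Run procedure: move `τ` of the trains waiting at `v`,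
`⌈τ/2⌉` to the current successor and `⌊τ/2⌋` to the next one, swapping the
successors if `τ` is odd. -/
def MStepAt (A : Arrival V) (v : V) (τ : ℕ) (s s' : MState V) : Prop :=
  1 ≤ τ ∧ τ ≤ s.t (Sum.inl v) ∧
  s'.ev = (fun u => s.ev u + if u = v then (if s.sw v then τ / 2 else (τ + 1) / 2) else 0) ∧
  s'.od = (fun u => s.od u + if u = v then (if s.sw v then (τ + 1) / 2 else τ / 2) else 0) ∧
  s'.t = (fun u => (s.t u - if u = Sum.inl v then τ else 0) +
      ((if A.curr s v = u then (τ + 1) / 2 else 0) + (if A.nxt s v = u then τ / 2 else 0))) ∧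
  s'.sw = fun u => if u = v then Bool.xor (s.sw v) (τ % 2 == 1) else s.sw u

/-- One (nondeterministic) iteration: some vertex outside `S` with waiting trains is picked. -/
def MStep (A : Arrival V) (S : Finset V) (s s' : MState V) : Prop :=
  ∃ v ∉ S, ∃ τ, MStepAt A v τ s s'

/-- No trains are waiting outside `S`. -/
def IsFinal (S : Finset V) (s : MState V) : Prop :=
  ∀ v : V, v ∉ S → s.t (Sum.inl v) = 0

/-- Edge-traversal profile of a Multi-Run state. -/
def flowOf {V : Type} (s : MState V) : SFlow V := ⟨1, s.ev, s.od⟩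

namespace MRaux

variable {V : Type} [Fintype V] [DecidableEq V]

/-- Trains injected at `u` from the initial placement at `S`. -/
def wS (S : Finset V) (w : V → ℕ) : V ⊕ Bool → ℕ := fun u =>
  match u with
  | Sum.inl v => if v ∈ S then w v else 0
  | Sum.inr _ => 0

/-- Outflow at a vertex of the switch graph. -/
def outP (s : MState V) : V ⊕ Bool → ℕ := fun u =>
  match u with
  | Sum.inl v => s.ev v + s.od v
  | Sum.inr _ => 0

/-- Inflow at `u` for a Multi-Run state. -/
def intoS (A : Arrival V) (s : MState V) (u : V ⊕ Bool) : ℕ :=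
  (if Sum.inl A.o = u then 1 else 0) +
    ∑ v : V, ((if A.sEven v = u then s.ev v else 0) + (if A.sOdd v = u then s.od v else 0))

/-- Invariants maintained by the Multi-Run procedure. -/
structure Inv (A : Arrival V) (S : Finset V) (w : V → ℕ) (s : MState V) : Prop where
  swinv : ∀ v ∉ S, s.ev v = s.od v + (if s.sw v then 1 else 0)
  sfix : ∀ v ∈ S, s.ev v = (w v + 1) / 2 ∧ s.od v = w v / 2
  cons : ∀ u, intoS A s u + wS S w u = s.t u + outP s u
  tot : ∑ u : V ⊕ Bool, s.t u = 1 + ∑ v ∈ S, w v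

lemma inv_init (A : Arrival V) (S : Finset V) (w : V → ℕ) : Inv A S w (mInit A S w) := by
  constructor
  · intro v hv; simp [mInit, hv]
  · intro v hv; simp [mInit, hv]
  · intro u
    have h1 : ∑ v : V, ((if A.sEven v = u then (mInit A S w).ev v else 0) +
        (if A.sOdd v = u then (mInit A S w).od v else 0)) =
        ∑ v ∈ S, ((if A.sEven v = u then (w v + 1) / 2 else 0) +
          (if A.sOdd v = u then w v / 2 else 0)) := by
      rw [← Finset.sum_subset S.subset_univ (by intro v _ hv; simp [mInit, hv])]
      exact Finset.sum_congr rfl (by intro v hv; simp [mInit, hv])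
    have h2 : intoS A (mInit A S w) u = (mInit A S w).t u := by
      rw [intoS, h1]; rfl
    have h3 : wS S w u = outP (mInit A S w) u := by
      cases u with
      | inl v =>
        show (if v ∈ S then w v else 0) = (mInit A S w).ev v + (mInit A S w).od v
        simp only [mInit]; split_ifs <;> omega
      | inr b => rfl
    rw [h2, h3]
  · show ∑ u : V ⊕ Bool, ((if Sum.inl A.o = u then 1 else 0) +
      ∑ v ∈ S, ((if A.sEven v = u then (w v + 1) / 2 else 0) +
        (if A.sOdd v = u then w v / 2 else 0))) = 1 + ∑ v ∈ S, w v
    rw [Finset.sum_add_distrib, Finset.sum_comm]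
    simp only [Finset.sum_ite_eq, Finset.mem_univ, if_true, Finset.sum_add_distrib]
    rw [← Finset.sum_add_distrib]
    congr 1
    exact Finset.sum_congr rfl (by intro v _; omega)

lemma inv_step {A : Arrival V} {S : Finset V} {w : V → ℕ} {s s' : MState V}
    (hs : Inv A S w s) {v : V} (hv : v ∉ S) {τ : ℕ} (h : MStepAt A v τ s s') :
    Inv A S w s' := by
  obtain ⟨hτ1, hτt, hev, hod, ht, hsw⟩ := h
  have hinto : ∀ u, intoS A s' u = intoS A s u +
      ((if A.curr s v = u then (τ + 1) / 2 else 0) + (if A.nxt s v = u then τ / 2 else 0)) := by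
    intro u
    have hsum : ∀ v' : V,
        ((if A.sEven v' = u then s'.ev v' else 0) + (if A.sOdd v' = u then s'.od v' else 0)) =
        ((if A.sEven v' = u then s.ev v' else 0) + (if A.sOdd v' = u then s.od v' else 0)) +
        ((if v' = v then (if A.sEven v = u then (if s.sw v then τ / 2 else (τ + 1) / 2) else 0)
            else 0) +
         (if v' = v then (if A.sOdd v = u then (if s.sw v then (τ + 1) / 2 else τ / 2) else 0)
            else 0)) := by
      intro v'
      simp only [hev, hod]
      by_cases hvv : v' = v
      · subst hvv; split_ifs <;> omega
      · simp [hvv]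
    have hind : (if A.sEven v = u then (if s.sw v then τ / 2 else (τ + 1) / 2) else 0) +
        (if A.sOdd v = u then (if s.sw v then (τ + 1) / 2 else τ / 2) else 0) =
        (if A.curr s v = u then (τ + 1) / 2 else 0) + (if A.nxt s v = u then τ / 2 else 0) := by
      cases hb : s.sw v <;> simp [Arrival.curr, Arrival.nxt, hb] <;> omega
    rw [intoS, intoS, Finset.sum_congr rfl (fun v' _ => hsum v')]
    simp only [Finset.sum_add_distrib, Finset.sum_ite_eq', Finset.mem_univ, if_true]
    omega
  constructor
  · intro x hx
    by_cases hxv : x = v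
    · subst hxv
      have hold := hs.swinv x hx
      simp only [hev, hod, hsw]
      rcases Nat.mod_two_eq_zero_or_one τ with hm | hm <;>
        cases hb : s.sw x <;> simp [hb, hm] at hold ⊢ <;> omega
    · simp only [hev, hod, hsw]
      simp only [hxv, if_false]
      have := hs.swinv x hx
      split_ifs at this ⊢ <;> omega
  · intro x hx
    have hxv : ¬ (x = v) := fun hh => hv (hh ▸ hx)
    simp only [hev, hod]
    simp only [hxv, if_false, add_zero]
    exact hs.sfix x hx
  · intro u
    have hc := hs.cons u
    have hτ2 : (τ + 1) / 2 + τ / 2 = τ := by omega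
    rw [hinto]; simp only [ht]
    cases u with
    | inl x =>
      have ho2 : outP s (Sum.inl x) = s.ev x + s.od x := rfl
      have ho : outP s' (Sum.inl x) = s.ev x + s.od x + (if x = v then τ else 0) := by
        show s'.ev x + s'.od x = _
        simp only [hev, hod]
        split_ifs <;> omega
      have he : (if (Sum.inl x : V ⊕ Bool) = Sum.inl v then τ else 0) =
          (if x = v then τ else 0) := by simp
      have hts : (if x = v then τ else 0) ≤ s.t (Sum.inl x) := by
        split_ifs with hh
        · rw [hh]; exact hτt
        · exact Nat.zero_le _
      rw [ho2] at hc
      rw [ho, he]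
      omega
    | inr b =>
      have ho : outP s' (Sum.inr b : V ⊕ Bool) = 0 := rfl
      have ho2 : outP s (Sum.inr b : V ⊕ Bool) = 0 := rfl
      have he : (if (Sum.inr b : V ⊕ Bool) = Sum.inl v then τ else 0) = 0 := by simp
      rw [ho2] at hc
      rw [ho, he]
      omega
  · have hle : ∀ u : V ⊕ Bool, (if u = Sum.inl v then τ else 0) ≤ s.t u := by
      intro u; split_ifs with hh
      · subst hh; exact hτt
      · exact Nat.zero_le _
    have hsub : ∑ u : V ⊕ Bool, (s.t u - if u = Sum.inl v then τ else 0) + τ =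
        ∑ u : V ⊕ Bool, s.t u := by
      have hτsum : ∑ u : V ⊕ Bool, (if u = Sum.inl v then τ else 0) = τ := by
        simp [Finset.sum_ite_eq']
      calc ∑ u : V ⊕ Bool, (s.t u - if u = Sum.inl v then τ else 0) + τ
          = ∑ u : V ⊕ Bool, (s.t u - if u = Sum.inl v then τ else 0) +
            ∑ u : V ⊕ Bool, (if u = Sum.inl v then τ else 0) := by rw [hτsum]
        _ = ∑ u : V ⊕ Bool, ((s.t u - if u = Sum.inl v then τ else 0) +
            (if u = Sum.inl v then τ else 0)) := (Finset.sum_add_distrib).symm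
        _ = ∑ u : V ⊕ Bool, s.t u :=
            Finset.sum_congr rfl (fun u _ => Nat.sub_add_cancel (hle u))
    have htot := hs.tot
    have hind : ∑ u : V ⊕ Bool, ((if A.curr s v = u then (τ + 1) / 2 else 0) +
        (if A.nxt s v = u then τ / 2 else 0)) = (τ + 1) / 2 + τ / 2 := by
      rw [Finset.sum_add_distrib]
      simp [Finset.sum_ite_eq]
    have hτ2 : (τ + 1) / 2 + τ / 2 = τ := by omega
    calc ∑ u : V ⊕ Bool, s'.t u
        = ∑ u : V ⊕ Bool, ((s.t u - if u = Sum.inl v then τ else 0) +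
          ((if A.curr s v = u then (τ + 1) / 2 else 0) +
            (if A.nxt s v = u then τ / 2 else 0))) := by rw [ht]
      _ = ∑ u : V ⊕ Bool, (s.t u - if u = Sum.inl v then τ else 0) +
          ∑ u : V ⊕ Bool, ((if A.curr s v = u then (τ + 1) / 2 else 0) +
            (if A.nxt s v = u then τ / 2 else 0)) := Finset.sum_add_distrib
      _ = 1 + ∑ v ∈ S, w v := by omega

lemma Inv.bnd {A : Arrival V} {S : Finset V} {w : V → ℕ} {s : MState V}
    (hs : Inv A S w s) (v : V) : s.od v ≤ s.ev v ∧ s.ev v ≤ s.od v + 1 := by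
  by_cases hv : v ∈ S
  · obtain ⟨h1, h2⟩ := hs.sfix v hv; omega
  · have := hs.swinv v hv; split_ifs at this <;> omega

lemma Inv.tle {A : Arrival V} {S : Finset V} {w : V → ℕ} {s : MState V}
    (hs : Inv A S w s) (u : V ⊕ Bool) : s.t u ≤ 1 + ∑ v ∈ S, w v := by
  rw [← hs.tot]
  exact Finset.single_le_sum (fun i _ => Nat.zero_le _) (Finset.mem_univ u)

lemma pathlen_succ {A : Arrival V} {u : V ⊕ Bool} {P : V ⊕ Bool → Prop} {n : ℕ}
    (h : A.PathLen u P (n + 1)) : ∃ u', A.Edge u u' ∧ A.PathLen u' P n := by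
  obtain ⟨f, hf0, hfP, hfe⟩ := h
  exact ⟨f 1, hf0 ▸ hfe 0 (Nat.succ_pos n),
    fun i => f (i + 1), rfl, hfP, fun i hi => hfe (i + 1) (by omega)⟩

/-- Recursive upper bound on inflows along shortest paths. -/
def hb (T : ℕ) : ℕ → ℕ
  | 0 => T
  | (n + 1) => T + 2 * hb T n + 1

lemma hb_mono (T : ℕ) : Monotone (hb T) :=
  monotone_nat_of_le_succ (fun n => by show hb T n ≤ T + 2 * hb T n + 1; omega)

lemma into_bound {A : Arrival V} {S : Finset V} {w : V → ℕ} {s : MState V}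
    (hs : Inv A S w s) :
    ∀ n (u : V ⊕ Bool), A.PathLen u DestP n →
      intoS A s u ≤ hb (1 + ∑ v ∈ S, w v) n := by
  have hdest : ∀ b : Bool, intoS A s (Sum.inr b) ≤ 1 + ∑ v ∈ S, w v := by
    intro b
    have hc := hs.cons (Sum.inr b)
    have h1 : wS S w (Sum.inr b : V ⊕ Bool) = 0 := rfl
    have h2 : outP s (Sum.inr b : V ⊕ Bool) = 0 := rfl
    have h3 := hs.tle (Sum.inr b)
    omega
  intro n
  induction n with
  | zero =>
    intro u hu
    obtain ⟨f, hf0, ⟨b, hbb⟩, -⟩ := hu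
    rw [← hf0, hbb]
    exact hdest b
  | succ n ih =>
    intro u hu
    cases u with
    | inr b =>
      have := hdest b
      show intoS A s (Sum.inr b) ≤ (1 + ∑ v ∈ S, w v) + 2 * hb (1 + ∑ v ∈ S, w v) n + 1
      omega
    | inl v =>
      obtain ⟨u', he, hp⟩ := pathlen_succ hu
      obtain ⟨x, hx, hor⟩ := he
      obtain rfl : v = x := by injection hx
      have hbd := hs.bnd v
      have hodle : s.od v ≤ intoS A s u' := by
        have hterm : s.od v ≤ (if A.sEven v = u' then s.ev v else 0) +
            (if A.sOdd v = u' then s.od v else 0) := by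
          rcases hor with hh | hh <;> subst hh <;> simp only [if_pos rfl] <;>
            split_ifs <;> omega
        have hsum : ((if A.sEven v = u' then s.ev v else 0) +
            (if A.sOdd v = u' then s.od v else 0)) ≤
            ∑ x : V, ((if A.sEven x = u' then s.ev x else 0) +
              (if A.sOdd x = u' then s.od x else 0)) :=
          Finset.single_le_sum (f := fun x => (if A.sEven x = u' then s.ev x else 0) +
            (if A.sOdd x = u' then s.od x else 0)) (fun i _ => Nat.zero_le _)
            (Finset.mem_univ v)
        calc s.od v ≤ _ := hterm
          _ ≤ _ := hsum
          _ ≤ intoS A s u' := Nat.le_add_left _ _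
      have h1 : intoS A s (Sum.inl v) ≤ s.t (Sum.inl v) + (s.ev v + s.od v) := by
        have hc := hs.cons (Sum.inl v)
        have ho : outP s (Sum.inl v) = s.ev v + s.od v := rfl
        rw [ho] at hc
        omega
      have h2 := ih u' hp
      have h3 := hs.tle (Sum.inl v)
      show intoS A s (Sum.inl v) ≤ (1 + ∑ x ∈ S, w x) + 2 * hb (1 + ∑ x ∈ S, w x) n + 1
      omega

lemma flow_bound (A : Arrival V) (S : Finset V) (w : V → ℕ) (hA : A.Terminating) :
    ∃ N : ℕ, ∀ s : MState V, Inv A S w s → ∑ v : V, (s.ev v + s.od v) ≤ N := by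
  classical
  choose g hg using hA
  refine ⟨∑ v : V, (hb (1 + ∑ x ∈ S, w x) (Finset.univ.sup g) + w v),
    fun s hs => Finset.sum_le_sum fun v _ => ?_⟩
  have hc := hs.cons (Sum.inl v)
  have ho : outP s (Sum.inl v) = s.ev v + s.od v := rfl
  have hw : wS S w (Sum.inl v) = if v ∈ S then w v else 0 := rfl
  have h2 := into_bound hs (g v) (Sum.inl v) (hg v)
  have h3 : hb (1 + ∑ x ∈ S, w x) (g v) ≤ hb (1 + ∑ x ∈ S, w x) (Finset.univ.sup g) :=
    hb_mono _ (Finset.le_sup (Finset.mem_univ v))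
  rw [ho, hw] at hc
  split_ifs at hc <;> omega

end MRaux

/-- The Multi-Run procedure terminates: there is no infinite sequence of iterations
starting from the initial configuration. -/
theorem multirun_terminates (A : Arrival V) (hA : A.Terminating)
    (S : Finset V) (w : V → ℕ) :
    ¬ ∃ f : ℕ → MState V, f 0 = mInit A S w ∧ ∀ i : ℕ, MStep A S (f i) (f (i + 1)) := by
  rintro ⟨f, hf0, hstep⟩
  have hinv : ∀ i, MRaux.Inv A S w (f i) := by
    intro i
    induction i with
    | zero => rw [hf0]; exact MRaux.inv_init A S w
    | succ i ih =>
      obtain ⟨v, hv, τ, h⟩ := hstep i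
      exact MRaux.inv_step ih hv h
  obtain ⟨N, hN⟩ := MRaux.flow_bound A S w hA
  have hincr : ∀ i, (∑ v : V, ((f i).ev v + (f i).od v)) + 1 ≤
      ∑ v : V, ((f (i + 1)).ev v + (f (i + 1)).od v) := by
    intro i
    obtain ⟨v, hv, τ, hτ1, hτt, hev, hod, -, -⟩ := hstep i
    have hpt : ∀ x : V, (f (i + 1)).ev x + (f (i + 1)).od x =
        ((f i).ev x + (f i).od x) + (if x = v then τ else 0) := by
      intro x; simp only [hev, hod]; split_ifs <;> omega
    have hsum : ∑ x : V, ((f (i + 1)).ev x + (f (i + 1)).od x) =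
        (∑ x : V, ((f i).ev x + (f i).od x)) + τ := by
      rw [Finset.sum_congr rfl fun x _ => hpt x, Finset.sum_add_distrib]
      simp [Finset.sum_ite_eq']
    omega
  have hlow : ∀ i, i ≤ ∑ v : V, ((f i).ev v + (f i).od v) := by
    intro i
    induction i with
    | zero => exact Nat.zero_le _
    | succ i ih => have := hincr i; omega
  have h1 := hlow (N + 1)
  have h2 := hN (f (N + 1)) (hinv (N + 1))
  omega
end

section
/- Fix a terminating ARRIVAL instance A and S = {v_1,...,v_k} ⊆ V. Define F : ℕ^k → ℕ^k by F(w)_i = x̂⁻(v_i), where x̂ is the (unique, choice-independent) Multi-Run profile for input w and x̂⁻(v_i) is the total flow into v_i. Then F is monotone: w ≤ w' componentwise implies F(w) ≤ F(w') componentwise. -/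
variable {V : Type} [Fintype V] [DecidableEq V]

/-- Candidate switching flow w.r.t. `S` and prescribed outflows `w`. -/
def IsCandFlow (A : Arrival V) (S : Finset V) (w : V → ℕ) (x : SFlow V) : Prop :=
  x.yard = 1 ∧
  (∀ v : V, v ∉ S → x.out v = SFlow.into A x (Sum.inl v)) ∧
  (∀ v ∈ S, x.out v = w v) ∧
  ∀ v : V, x.od v ≤ x.ev v ∧ x.ev v ≤ x.od v + 1

/-!
Outflow vectors of candidate switching flows for `w` are the fixed points of a monotone map
`candidateMap A S w` on the well-founded order `V → ℕ`. When `w ≤ w'`, the outflow vector of `x'`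
is a pre-fixed point of this map, so some fixed point, i.e. the outflow vector of a candidate
flow for `w`, lies below it. Minimality of `x` puts `x` below that flow, hence below `x'`, and
inflows are monotone in the flow.
-/

-- A minimal pre-fixed point is a fixed point.
theorem Monotone.exists_fixed_le_of_map_le {α : Type*} [PartialOrder α] [WellFoundedLT α]
    {f : α → α} (hf : Monotone f) {b : α} (hb : f b ≤ b) : ∃ a ≤ b, f a = a := by
  obtain ⟨a, hab, hfa, hmin⟩ := exists_minimal_le_of_wellFoundedLT (fun a => f a ≤ a) b hb
  exact ⟨a, hab, le_antisymm hfa (hmin (hf hfa) hfa)⟩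

namespace SFlow

def ofOut {V : Type} (t : V → ℕ) : SFlow V := ⟨1, fun v => (t v + 1) / 2, fun v => t v / 2⟩

theorem out_ofOut {V : Type} (t : V → ℕ) : (ofOut t).out = t := by
  funext v
  simp only [ofOut, out]
  omega

theorem ofOut_out {V : Type} {x : SFlow V} (hyard : x.yard = 1)
    (hswitch : ∀ v : V, x.od v ≤ x.ev v ∧ x.ev v ≤ x.od v + 1) : ofOut x.out = x := by
  obtain ⟨yard, ev, od⟩ := x
  simp only [ofOut, out, mk.injEq] at hyard hswitch ⊢
  refine ⟨hyard.symm, ?_, ?_⟩ <;> funext v <;> have := hswitch v <;> omega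

theorem into_ofOut_mono (A : Arrival V) (u : V ⊕ Bool) :
    Monotone fun t : V → ℕ => (ofOut t).into A u := by
  intro t t' h
  unfold into ofOut
  refine add_le_add le_rfl (Finset.sum_le_sum fun v _ => add_le_add ?_ ?_) <;> split_ifs
  exacts [Nat.div_le_div_right (Nat.add_le_add_right (h v) 1), le_rfl,
    Nat.div_le_div_right (h v), le_rfl]

end SFlow

def candidateMap (A : Arrival V) (S : Finset V) (w t : V → ℕ) : V → ℕ := fun v =>
  if v ∈ S then w v else (SFlow.ofOut t).into A (Sum.inl v)

theorem candidateMap_mono (A : Arrival V) (S : Finset V) {w w' t t' : V → ℕ}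
    (hw : ∀ v ∈ S, w v ≤ w' v) (ht : t ≤ t') :
    candidateMap A S w t ≤ candidateMap A S w' t' := by
  intro v
  unfold candidateMap
  split_ifs with hv
  exacts [hw v hv, SFlow.into_ofOut_mono A _ ht]

theorem isCandFlow_ofOut {A : Arrival V} {S : Finset V} {w t : V → ℕ}
    (hfix : candidateMap A S w t = t) : IsCandFlow A S w (SFlow.ofOut t) := by
  refine ⟨rfl, fun v hv => ?_, fun v hv => ?_, fun v => ?_⟩
  · rw [SFlow.out_ofOut, ← congrFun hfix v, candidateMap, if_neg hv]
  · rw [SFlow.out_ofOut, ← congrFun hfix v, candidateMap, if_pos hv]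
  · simp only [SFlow.ofOut]
    omega

theorem IsCandFlow.candidateMap_out {A : Arrival V} {S : Finset V} {w : V → ℕ} {x : SFlow V}
    (h : IsCandFlow A S w x) : candidateMap A S w x.out = x.out := by
  obtain ⟨hyard, hcons, hpre, hswitch⟩ := h
  funext v
  unfold candidateMap
  split_ifs with hv
  · exact (hpre v hv).symm
  · rw [SFlow.ofOut_out hyard hswitch]
    exact (hcons v hv).symm

theorem multirun_inflow_monotone_general (A : Arrival V)
    (S : Finset V) (w w' : V → ℕ) (x x' : SFlow V)
    (hx : IsCandFlow A S w x)
    (hxmin : ∀ y : SFlow V, IsCandFlow A S w y → ∀ v : V, x.ev v ≤ y.ev v ∧ x.od v ≤ y.od v)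
    (hx' : IsCandFlow A S w' x')
    (hw : ∀ v ∈ S, w v ≤ w' v) :
    ∀ v ∈ S, SFlow.into A x (Sum.inl v) ≤ SFlow.into A x' (Sum.inl v) := by
  intro v _
  have hpre : candidateMap A S w x'.out ≤ x'.out :=
    (candidateMap_mono A S hw le_rfl).trans_eq hx'.candidateMap_out
  have hmono : Monotone (candidateMap A S w) := fun _ _ => candidateMap_mono A S fun _ _ => le_rfl
  obtain ⟨t, ht, hfix⟩ := hmono.exists_fixed_le_of_map_le hpre
  have hxt : x.out ≤ t := fun u => by
    obtain ⟨hev, hod⟩ := hxmin _ (isCandFlow_ofOut hfix) u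
    rw [← SFlow.out_ofOut t]
    exact add_le_add hev hod
  rw [← SFlow.ofOut_out hx.1 hx.2.2.2, ← SFlow.ofOut_out hx'.1 hx'.2.2.2]
  exact SFlow.into_ofOut_mono A _ (hxt.trans ht)

/-- Monotonicity of `F`: if `x` resp. `x'` are the minimal candidate switching flows
for outflow guesses `w ≤ w'`, then the inflows at the vertices of `S` are monotone. -/
theorem multirun_inflow_monotone (A : Arrival V) (hA : A.Terminating)
    (S : Finset V) (w w' : V → ℕ) (x x' : SFlow V)
    (hx : IsCandFlow A S w x)
    (hxmin : ∀ y : SFlow V, IsCandFlow A S w y → ∀ v : V, x.ev v ≤ y.ev v ∧ x.od v ≤ y.od v)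
    (hx' : IsCandFlow A S w' x')
    (hx'min : ∀ y : SFlow V, IsCandFlow A S w' y → ∀ v : V, x'.ev v ≤ y.ev v ∧ x'.od v ≤ y.od v)
    (hw : ∀ v ∈ S, w v ≤ w' v) :
    ∀ v ∈ S, SFlow.into A x (Sum.inl v) ≤ SFlow.into A x' (Sum.inl v) :=
  multirun_inflow_monotone_general A S w w' x x' hx hxmin hx' hw
end
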